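/- arXiv:2510.12536 — 8 statements merged into one kernel-verified Lean document; each statement's English description precedes it below -/
import Mathlib

section
/- For every positive integer n, the polynomial identity Σ_{k=1}^{n} R_•(n,k) · t^k / k! = (t/n) · (n+t)^{n-1} holds in ℝ[t] (equivalently in ℤ[t] after multiplying both sides by n), where R_•(n,k) = k · (n-1)(n-2)···(n-k+1) · n^{n-k-1}. -/
open Polynomial in
theorem record_polynomial_identity (n : ℕ) (hn : 0 < n) :
    ∑ k ∈ Finset.Icc 1 n,
        C (((k : ℝ) * ((n - 1).descFactorial (k - 1)) * (n : ℝ) ^ ((n : ℤ) - k - 1))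
            / (k.factorial : ℝ)) * X ^ k
      = C (1 / (n : ℝ)) * X * (C (n : ℝ) + X) ^ (n - 1) := by
  have hn0 : (n : ℝ) ≠ 0 := Nat.cast_ne_zero.mpr hn.ne'
  rw [add_pow, ← Finset.Ico_add_one_right_eq_Icc, Finset.sum_Ico_eq_sum_range]
  have hrange : n - 1 + 1 = n := Nat.succ_pred_eq_of_pos hn
  have h1 : n + 1 - 1 = n := by omega
  rw [hrange, h1, Finset.mul_sum, ← Finset.sum_range_reflect]
  apply Finset.sum_congr rfl
  intro i hi
  have hi' : i < n := Finset.mem_range.mp hi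
  have e1 : 1 + (n - 1 - i) - 1 = n - 1 - i := by omega
  have e5 : 1 + (n - 1 - i) = n - i := by omega
  rw [e1, e5]
  have h3 : (n - 1).choose (n - 1 - i) = (n - 1).choose i :=
    Nat.choose_symm (by omega)
  have h6 : (n - 1).descFactorial (n - 1 - i) = (n - 1 - i).factorial * (n - 1).choose i := by
    rw [Nat.descFactorial_eq_factorial_mul_choose, h3]
  have h7 : (n : ℝ) ^ ((n : ℤ) - ((n - i : ℕ) : ℕ) - 1) = (n : ℝ) ^ i * (n : ℝ)⁻¹ := by
    have : (n : ℤ) - ((n - i : ℕ) : ℕ) - 1 = (i : ℤ) + (-1) := by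
      push_cast [Nat.cast_sub hi'.le]; ring
    rw [this, zpow_add₀ hn0, zpow_natCast, zpow_neg_one]
  have h5 : (n - i).factorial = (n - i) * (n - 1 - i).factorial := by
    rw [show n - i = (n - 1 - i) + 1 from by omega]
    rw [Nat.factorial_succ]
  have hfac : ((n - 1 - i).factorial : ℝ) ≠ 0 := Nat.cast_ne_zero.mpr (Nat.factorial_ne_zero _)
  have hni : ((n - i : ℕ) : ℝ) ≠ 0 := Nat.cast_ne_zero.mpr (by omega)
  have hcoef : ((n - i : ℕ) : ℝ) * ((n - 1).descFactorial (n - 1 - i))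
      * (n : ℝ) ^ ((n : ℤ) - ((n - i : ℕ) : ℕ) - 1) / ((n - i).factorial : ℝ)
      = 1 / (n : ℝ) * (n : ℝ) ^ i * ((n - 1).choose i : ℝ) := by
    rw [h6, h7, h5]
    push_cast
    field_simp
  rw [hcoef, ← C_eq_natCast, ← C_pow, C_mul, C_mul]
  rw [show n - i = (n - 1 - i) + 1 from by omega, pow_succ]
  ring
end

section
/- For every positive integer n, the sequence k ↦ R_•(n,k) = k · (n-1)(n-2)···(n-k+1) · n^{n-k-1}, for 1 ≤ k ≤ n, is log-concave: R_•(n,k)^2 ≥ R_•(n,k-1) · R_•(n,k+1) for all 2 ≤ k ≤ n-1. -/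
theorem tree_record_log_concave (n : ℕ) (hn : 0 < n) (k : ℕ) (hk : 2 ≤ k) (hkn : k ≤ n - 1) :
    ((k : ℝ) * ((n - 1).descFactorial (k - 1)) * (n : ℝ) ^ ((n : ℤ) - k - 1)) ^ 2
      ≥ (((k : ℝ) - 1) * ((n - 1).descFactorial (k - 2)) * (n : ℝ) ^ ((n : ℤ) - (k - 1) - 1))
        * (((k : ℝ) + 1) * ((n - 1).descFactorial k) * (n : ℝ) ^ ((n : ℤ) - (k + 1) - 1)) := by
  have hn3 : 3 ≤ n := by omega
  have hn0 : (n : ℝ) ≠ 0 := by positivity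
  set D : ℝ := ((n - 1).descFactorial (k - 2) : ℝ) with hD
  have hD0 : 0 ≤ D := by positivity
  have h1 : ((n - 1).descFactorial (k - 1) : ℝ) = ((n : ℝ) - k + 1) * D := by
    have e1 : k - 1 = (k - 2) + 1 := by omega
    have e2 : n - 1 - (k - 2) = n - k + 1 := by omega
    rw [e1, Nat.descFactorial_succ, e2, hD]
    push_cast [Nat.cast_sub (show k ≤ n by omega)]
    ring
  have h2 : ((n - 1).descFactorial k : ℝ) = ((n : ℝ) - k) * (((n : ℝ) - k + 1) * D) := by
    have e1 : k = (k - 1) + 1 := by omega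
    have e2 : n - 1 - (k - 1) = n - k := by omega
    rw [e1, Nat.descFactorial_succ, e2, ← e1]
    push_cast [Nat.cast_sub (show k ≤ n by omega)]
    rw [h1]
  have hpow : (n : ℝ) ^ ((n : ℤ) - (k - 1) - 1) * (n : ℝ) ^ ((n : ℤ) - (k + 1) - 1)
      = ((n : ℝ) ^ ((n : ℤ) - k - 1)) ^ 2 := by
    rw [sq, ← zpow_add₀ hn0, ← zpow_add₀ hn0]
    ring_nf
  set P : ℝ := (n : ℝ) ^ ((n : ℤ) - k - 1) with hP
  have hP0 : 0 ≤ P := by positivity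
  have hk2 : (2 : ℝ) ≤ (k : ℝ) := by exact_mod_cast hk
  have hkn' : (k : ℝ) ≤ (n : ℝ) - 1 := by
    have : (k : ℝ) ≤ ((n - 1 : ℕ) : ℝ) := by exact_mod_cast hkn
    rwa [Nat.cast_sub (by omega), Nat.cast_one] at this
  rw [h1, h2]
  have key : ((k : ℝ) ^ 2 * ((n : ℝ) - k + 1) - ((k : ℝ) ^ 2 - 1) * ((n : ℝ) - k)) ≥ 0 := by
    nlinarith
  calc (((k : ℝ) - 1) * D * (n : ℝ) ^ ((n : ℤ) - (k - 1) - 1))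
        * (((k : ℝ) + 1) * (((n : ℝ) - k) * (((n : ℝ) - k + 1) * D)) * (n : ℝ) ^ ((n : ℤ) - (k + 1) - 1))
      = (((k : ℝ) ^ 2 - 1) * ((n : ℝ) - k)) * (((n : ℝ) - k + 1) * D ^ 2)
          * ((n : ℝ) ^ ((n : ℤ) - (k - 1) - 1) * (n : ℝ) ^ ((n : ℤ) - (k + 1) - 1)) := by ring
    _ = (((k : ℝ) ^ 2 - 1) * ((n : ℝ) - k)) * (((n : ℝ) - k + 1) * D ^ 2) * P ^ 2 := by
          rw [hpow]
    _ ≤ ((k : ℝ) ^ 2 * ((n : ℝ) - k + 1)) * (((n : ℝ) - k + 1) * D ^ 2) * P ^ 2 := by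
          have hnk : (0 : ℝ) ≤ (n : ℝ) - k + 1 := by linarith
          nlinarith [sq_nonneg D, sq_nonneg P, mul_nonneg (mul_nonneg (mul_nonneg key hnk) (sq_nonneg D)) (sq_nonneg P)]
    _ = ((k : ℝ) * (((n : ℝ) - k + 1) * D) * P) ^ 2 := by ring
end

section
/- For a composition t = (t_1,...,t_k) of n (positive parts summing to n), the number of restricted flags of [n] of type t equals (1/n) · multinomial(n; t_1,...,t_k) · (t_1 t_2 ··· t_k) / ([t]_1 [t]_2 ··· [t]_{k-1}), where [t]_i = t_1 + ··· + t_i. -/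
open Finset

def IsRFlag (n k : ℕ) (t : ℕ → ℕ) (S : ℕ → Finset (Fin n)) : Prop :=
  S 0 = ∅ ∧ (∀ i, k ≤ i → S i = Finset.univ) ∧
  (∀ i < k, S i ⊆ S (i + 1)) ∧
  (∀ i ∈ Finset.Icc 1 (k - 1), ∀ x ∈ S (i + 1),
      (∀ y ∈ S (i + 1), y ≤ x) → x ∉ S i) ∧
  (∀ i ∈ Finset.Icc 1 k, (S i \ S (i - 1)).card = t i)

-- card of level i
lemma rflag_card {n k : ℕ} {t : ℕ → ℕ} {S : ℕ → Finset (Fin n)}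
    (h : IsRFlag n k t S) : ∀ i ≤ k, (S i).card = ∑ j ∈ Icc 1 i, t j := by
  obtain ⟨h0, huniv, hsub, hmax, hcard⟩ := h
  intro i
  induction i with
  | zero => intro _; simp [h0]
  | succ i ih =>
    intro hik
    have h1 : S i ⊆ S (i+1) := hsub i (by omega)
    have h2 := hcard (i+1) (by simp; omega)
    simp only [Nat.add_sub_cancel] at h2
    have := Finset.card_sdiff_add_card_eq_card h1
    rw [Finset.sum_Icc_succ_top (by omega : 1 ≤ i + 1), ← ih (by omega)]
    omega

lemma count_subsets_avoiding (n m : ℕ) (a : Fin n) :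
    Nat.card {A : Finset (Fin n) // A.card = m ∧ a ∉ A} = (n-1).choose m := by
  rw [Nat.card_eq_fintype_card, Fintype.card_subtype]
  have : (univ.filter fun A : Finset (Fin n) => A.card = m ∧ a ∉ A)
      = Finset.powersetCard m (univ.erase a) := by
    ext A
    simp only [mem_filter, mem_univ, true_and, Finset.mem_powersetCard]
    constructor
    · rintro ⟨h1, h2⟩
      exact ⟨fun x hx => Finset.mem_erase.2 ⟨fun e => h2 (e ▸ hx), mem_univ x⟩, h1⟩
    · rintro ⟨h1, h2⟩
      exact ⟨h2, fun hx => (Finset.mem_erase.1 (h1 hx)).1 rfl⟩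
  rw [this, Finset.card_powersetCard, Finset.card_erase_of_mem (mem_univ a), Finset.card_univ,
    Fintype.card_fin]

lemma rflag_base (n : ℕ) (hn : 0 < n) (t : ℕ → ℕ) (h1 : t 1 = n) :
    Nat.card {S : ℕ → Finset (Fin n) // IsRFlag n 1 t S} = 1 := by
  rw [Nat.card_eq_one_iff_unique]
  constructor
  · constructor
    rintro ⟨S, hS0, hSu, -, -, -⟩ ⟨T, hT0, hTu, -, -, -⟩
    apply Subtype.ext
    funext i
    show S i = T i
    rcases Nat.eq_zero_or_pos i with h | h
    · subst h; rw [hS0, hT0]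
    · rw [hSu i h, hTu i h]
  · refine ⟨⟨fun i => if i = 0 then ∅ else Finset.univ, rfl, fun i hi => by simp; omega,
      fun i hi => by simp, fun i hi => by simp at hi, fun i hi => ?_⟩⟩
    have : i = 1 := by simp at hi; omega
    subst this
    simp [h1]

lemma rflag_mono {n k : ℕ} {t : ℕ → ℕ} {S : ℕ → Finset (Fin n)}
    (h : IsRFlag n k t S) : ∀ a b : ℕ, a ≤ b → S a ⊆ S b := by
  obtain ⟨h0, huniv, hsub, -, -⟩ := h
  have step : ∀ i, S i ⊆ S (i+1) := by
    intro i
    rcases lt_or_ge i k with hi | hi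
    · exact hsub i hi
    · rw [huniv i hi, huniv (i+1) (by omega)]
  intro a b hab
  induction b with
  | zero => simp_all
  | succ b ih =>
    rcases Nat.lt_or_ge a (b+1) with h' | h'
    · exact (ih (by omega)).trans (step b)
    · have : a = b + 1 := by omega
      subst this; rfl

lemma oif_inj {n m : ℕ} (A : Finset (Fin n)) (h : A.card = m) :
    Function.Injective (fun x : Fin m => (↑(A.orderIsoOfFin h x) : Fin n)) :=
  fun a b hab => (A.orderIsoOfFin h).injective (Subtype.ext hab)

lemma oif_congr {n m : ℕ} {A B : Finset (Fin n)} (hAB : A = B) (hA : A.card = m)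
    (x : Fin m) :
    (↑(A.orderIsoOfFin hA x) : Fin n) = ↑(B.orderIsoOfFin (hAB ▸ hA) x) := by
  subst hAB; rfl

lemma filter_oif_image {n m : ℕ} (A : Finset (Fin n)) (h : A.card = m)
    (B : Finset (Fin n)) (hBA : B ⊆ A) :
    (Finset.univ.filter fun x : Fin m => ↑(A.orderIsoOfFin h x) ∈ B).image
      (fun x => (↑(A.orderIsoOfFin h x) : Fin n)) = B := by
  ext y
  simp only [mem_image, mem_filter, mem_univ, true_and]
  constructor
  · rintro ⟨x, hx, rfl⟩; exact hx
  · intro hy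
    refine ⟨(A.orderIsoOfFin h).symm ⟨y, hBA hy⟩, ?_, ?_⟩ <;> simp [hy]

lemma card_filter_oif {n m : ℕ} (A : Finset (Fin n)) (h : A.card = m)
    (B : Finset (Fin n)) (hBA : B ⊆ A) :
    (Finset.univ.filter fun x : Fin m => ↑(A.orderIsoOfFin h x) ∈ B).card = B.card := by
  conv_rhs => rw [← filter_oif_image A h B hBA]
  rw [Finset.card_image_of_injective _ (oif_inj A h)]

lemma step_forward {n k m : ℕ} {t : ℕ → ℕ} (hk : 1 ≤ k)
    {S : ℕ → Finset (Fin n)} (hS : IsRFlag n (k+1) t S) (hA : (S k).card = m) :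
    IsRFlag m k t
      (fun i => Finset.univ.filter fun x : Fin m => ↑((S k).orderIsoOfFin hA x) ∈ S i) := by
  obtain ⟨h0, huniv, hsub, hmax, hcard⟩ := hS
  have hS' : IsRFlag n (k+1) t S := ⟨h0, huniv, hsub, hmax, hcard⟩
  refine ⟨?_, ?_, ?_, ?_, ?_⟩
  · simp [h0]
  · intro i hi
    rw [Finset.filter_eq_self]
    intro x _
    rcases eq_or_lt_of_le hi with rfl | h'
    · exact ((S k).orderIsoOfFin hA x).2
    · rw [huniv i (by omega)]; exact Finset.mem_univ _
  · intro i hik x hx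
    simp only [Finset.mem_filter, Finset.mem_univ, true_and] at hx ⊢
    exact hsub i (by omega) hx
  · intro i hi x hx hmaxx hxin
    simp only [Finset.mem_filter, Finset.mem_univ, true_and] at hx hxin
    simp only [Finset.mem_Icc] at hi
    refine hmax i (by simp; omega) _ hx ?_ hxin
    intro y hy
    have hyA : y ∈ S k := rflag_mono hS' (i+1) k (by omega) hy
    have hz : ↑(((S k).orderIsoOfFin hA) (((S k).orderIsoOfFin hA).symm ⟨y, hyA⟩)) = y := by
      simp
    have hmem : ((S k).orderIsoOfFin hA).symm ⟨y, hyA⟩ ∈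
        Finset.univ.filter fun x : Fin m => ↑((S k).orderIsoOfFin hA x) ∈ S (i+1) := by
      simp only [Finset.mem_filter, Finset.mem_univ, true_and, hz]
      exact hy
    have hle := hmaxx _ hmem
    have : ((S k).orderIsoOfFin hA) (((S k).orderIsoOfFin hA).symm ⟨y, hyA⟩)
        ≤ ((S k).orderIsoOfFin hA) x := ((S k).orderIsoOfFin hA).le_iff_le.2 hle
    rw [← hz]
    exact this
  · intro i hi
    simp only [Finset.mem_Icc] at hi
    have hsd : (Finset.univ.filter fun x : Fin m => ↑((S k).orderIsoOfFin hA x) ∈ S i)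
        \ (Finset.univ.filter fun x : Fin m => ↑((S k).orderIsoOfFin hA x) ∈ S (i-1))
        = Finset.univ.filter fun x : Fin m => ↑((S k).orderIsoOfFin hA x) ∈ S i \ S (i-1) := by
      ext x
      simp only [Finset.mem_sdiff, Finset.mem_filter, Finset.mem_univ, true_and]
    rw [hsd]
    rw [card_filter_oif _ hA _ ((Finset.sdiff_subset).trans (rflag_mono hS' i k (by omega : i ≤ k)))]
    exact hcard i (by simp; omega)

lemma image_oif_univ {n m : ℕ} (A : Finset (Fin n)) (h : A.card = m) :
    (Finset.univ : Finset (Fin m)).image (fun x => (↑(A.orderIsoOfFin h x) : Fin n)) = A := by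
  ext y
  simp only [Finset.mem_image, Finset.mem_univ, true_and]
  constructor
  · rintro ⟨x, rfl⟩; exact ((A.orderIsoOfFin h) x).2
  · intro hy; exact ⟨(A.orderIsoOfFin h).symm ⟨y, hy⟩, by simp⟩

lemma step_backward {n k m : ℕ} {t : ℕ → ℕ} (hk : 1 ≤ k) (hn : n = m + t (k+1))
    (htk : 0 < t (k+1)) (hm : 0 < m)
    {A : Finset (Fin n)} (hA : A.card = m) (htopA : (⟨n-1, by omega⟩ : Fin n) ∉ A)
    {T : ℕ → Finset (Fin m)} (hT : IsRFlag m k t T) :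
    IsRFlag n (k+1) t
      (fun i => if i ≤ k then (T i).image (fun x => ↑(A.orderIsoOfFin hA x)) else Finset.univ) := by
  simp only [IsRFlag]
  obtain ⟨h0, huniv, hsub, hmax, hcard⟩ := hT
  have htople : ∀ y : Fin n, (y : Fin n) ≤ ⟨n-1, by omega⟩ := by
    intro y; rw [Fin.le_def]; have := y.isLt; simp; omega
  have hsubA : ∀ B : Finset (Fin m),
      B.image (fun x => (↑(A.orderIsoOfFin hA x) : Fin n)) ⊆ A := by
    intro B y hy
    simp only [Finset.mem_image] at hy
    obtain ⟨x, -, rfl⟩ := hy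
    exact ((A.orderIsoOfFin hA) x).2
  refine ⟨?_, ?_, ?_, ?_, ?_⟩ <;> beta_reduce
  · simp [h0, Nat.zero_le]
  · intro i hi
    rw [if_neg (by omega : ¬ (i ≤ k))]
  · intro i hik
    rcases Nat.lt_or_ge i k with h' | h'
    · rw [if_pos (by omega : i ≤ k), if_pos (by omega : i + 1 ≤ k)]
      exact Finset.image_subset_image (hsub i h')
    · have hik' : i = k := by omega
      rw [hik', if_neg (by omega : ¬ (k + 1 ≤ k))]
      exact Finset.subset_univ _
  · intro i hi x hx hmaxx hxin
    simp only [Nat.add_sub_cancel, Finset.mem_Icc] at hi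
    rcases Nat.lt_or_ge i k with h' | h'
    · -- i < k
      rw [if_pos (by omega : i + 1 ≤ k)] at hx hmaxx
      rw [if_pos (by omega : i ≤ k)] at hxin
      simp only [Finset.mem_image] at hx hxin
      obtain ⟨z, hz, hze⟩ := hx
      obtain ⟨w, hw, hew⟩ := hxin
      have hwz : w = z := oif_inj A hA (show (↑((A.orderIsoOfFin hA) w) : Fin n) = ↑((A.orderIsoOfFin hA) z) by rw [hew, hze])
      refine hmax i (by simp; omega) z hz ?_ (hwz ▸ hw)
      intro u hu
      have h2 := hmaxx _ (Finset.mem_image_of_mem _ hu)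
      rw [← hze] at h2
      exact ((A.orderIsoOfFin hA).le_iff_le.1 h2)
    · -- i = k
      have hik' : i = k := by omega
      subst hik'
      rw [if_neg (by omega : ¬ (i + 1 ≤ i))] at hmaxx hx
      have hxtop : x = ⟨n-1, by omega⟩ := le_antisymm (htople x) (hmaxx _ (Finset.mem_univ _))
      rw [if_pos (le_refl i)] at hxin
      exact htopA (hxtop ▸ hsubA (T i) hxin)
  · intro i hi
    simp only [Finset.mem_Icc] at hi
    rcases Nat.lt_or_ge i (k+1) with h' | h'
    · rw [if_pos (by omega : i ≤ k), if_pos (by omega : i - 1 ≤ k),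
        ← Finset.image_sdiff _ _ (oif_inj A hA),
        Finset.card_image_of_injective _ (oif_inj A hA)]
      exact hcard i (by simp; omega)
    · have hik' : i = k + 1 := by omega
      subst hik'
      simp only [Nat.add_sub_cancel]
      rw [if_neg (by omega : ¬ (k + 1 ≤ k)), if_pos (le_refl k), huniv k le_rfl,
        image_oif_univ A hA,
        Finset.card_sdiff_of_subset (Finset.subset_univ _), Finset.card_univ, Fintype.card_fin, hA]
      omega

lemma rflag_step (n k m : ℕ) (t : ℕ → ℕ) (hk : 1 ≤ k) (hm : 0 < m)
    (hmdef : ∑ j ∈ Finset.Icc 1 k, t j = m) (htk : 0 < t (k+1)) (hn : n = m + t (k+1)) :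
    Nat.card {S : ℕ → Finset (Fin n) // IsRFlag n (k+1) t S}
      = (n-1).choose m * Nat.card {T : ℕ → Finset (Fin m) // IsRFlag m k t T} := by
  have hn0 : 0 < n := by omega
  rw [← count_subsets_avoiding n m (⟨n-1, by omega⟩ : Fin n), ← Nat.card_prod]
  apply Nat.card_congr
  have hcardA : ∀ Sp : {S : ℕ → Finset (Fin n) // IsRFlag n (k+1) t S},
      (Sp.1 k).card = m := fun Sp => by
    rw [rflag_card Sp.2 k (by omega), hmdef]
  have htopA : ∀ Sp : {S : ℕ → Finset (Fin n) // IsRFlag n (k+1) t S},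
      (⟨n-1, by omega⟩ : Fin n) ∉ Sp.1 k := by
    intro Sp
    have hSk1 : Sp.1 (k+1) = Finset.univ := Sp.2.2.1 (k+1) le_rfl
    refine Sp.2.2.2.2.1 k (by simp; omega) _ (by rw [hSk1]; exact Finset.mem_univ _) ?_
    intro y _
    rw [Fin.le_def]
    have := y.isLt
    simp
    omega
  refine
    { toFun := fun Sp =>
        (⟨Sp.1 k, hcardA Sp, htopA Sp⟩,
         ⟨fun i => Finset.univ.filter
              fun x : Fin m => ↑((Sp.1 k).orderIsoOfFin (hcardA Sp) x) ∈ Sp.1 i,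
          step_forward hk Sp.2 (hcardA Sp)⟩),
      invFun := fun P =>
        ⟨fun i => if i ≤ k then (P.2.1 i).image
              (fun x => ↑((P.1.1).orderIsoOfFin P.1.2.1 x)) else Finset.univ,
         step_backward hk hn htk hm P.1.2.1 P.1.2.2 P.2.2⟩,
      left_inv := ?_, right_inv := ?_ }
  · intro Sp
    apply Subtype.ext
    funext i
    dsimp only
    rcases Nat.lt_or_ge k i with h' | h'
    · rw [if_neg (by omega), Sp.2.2.1 i (by omega)]
    · rw [if_pos h']
      exact filter_oif_image (Sp.1 k) (hcardA Sp) (Sp.1 i) (rflag_mono Sp.2 i k h')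
  · rintro ⟨⟨A, hA1, hA2⟩, ⟨T, hT⟩⟩
    dsimp only
    have hSk : (if k ≤ k then (T k).image
        (fun x => (↑(A.orderIsoOfFin hA1 x) : Fin n)) else Finset.univ) = A := by
      rw [if_pos le_rfl, hT.2.1 k le_rfl, image_oif_univ]
    refine Prod.ext (Subtype.ext ?_) (Subtype.ext ?_)
    · exact hSk
    · funext i
      dsimp only
      simp only [oif_congr hSk]
      rcases Nat.lt_or_ge k i with h' | h'
      · rw [if_neg (by omega : ¬ (i ≤ k)), hT.2.1 i (by omega)]
        simp
      · rw [if_pos h']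
        ext x
        simp only [Finset.mem_filter, Finset.mem_univ, true_and, Finset.mem_image]
        constructor
        · rintro ⟨w, hw, hew⟩
          have hwx : w = x := (A.orderIsoOfFin hA1).injective (Subtype.ext hew)
          rwa [← hwx]
        · intro hx
          exact ⟨x, hx, rfl⟩

lemma rflag_count (t : ℕ → ℕ) : ∀ k, 1 ≤ k → ∀ n, 0 < n →
    (∀ i ∈ Finset.Icc 1 k, 0 < t i) → (∑ i ∈ Finset.Icc 1 k, t i = n) →
    Nat.card {S : ℕ → Finset (Fin n) // IsRFlag n k t S}
      = ∏ i ∈ Finset.Icc 1 (k-1),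
          ((∑ j ∈ Finset.Icc 1 (i+1), t j) - 1).choose (∑ j ∈ Finset.Icc 1 i, t j) := by
  intro k hk
  induction k, hk using Nat.le_induction with
  | base =>
    intro n hn hpos hsum
    simp only [Finset.Icc_self, Finset.sum_singleton] at hsum
    rw [rflag_base n hn t hsum]
    simp
  | succ k hk IH =>
    intro n hn hpos hsum
    obtain ⟨j, rfl⟩ : ∃ j, k = j + 1 := ⟨k - 1, by omega⟩
    set m := ∑ i ∈ Finset.Icc 1 (j+1), t i with hm
    have hm0 : 0 < m := by
      have h1 : t 1 ≤ m := Finset.single_le_sum (f := t) (fun i _ => Nat.zero_le _)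
        (by simp)
      have := hpos 1 (by simp)
      omega
    have hsum' : ∑ i ∈ Finset.Icc 1 (j+1+1), t i = m + t (j+1+1) := by
      rw [Finset.sum_Icc_succ_top (by omega : 1 ≤ j+1+1)]
    have htk : 0 < t (j+1+1) := hpos (j+1+1) (by simp)
    have hn' : n = m + t (j+1+1) := by omega
    rw [rflag_step n (j+1) m t (by omega) hm0 rfl htk hn']
    rw [IH m hm0 (fun i hi => hpos i (by simp at hi ⊢; omega)) rfl]
    simp only [Nat.add_sub_cancel]
    rw [Finset.prod_Icc_succ_top (by omega : 1 ≤ j+1)]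
    rw [mul_comm]
    congr 1
    rw [← hsum, Finset.sum_Icc_succ_top (by omega : 1 ≤ j+1+1), ← hm]

lemma rflag_arith (t : ℕ → ℕ) : ∀ k, 1 ≤ k → (∀ i ∈ Finset.Icc 1 k, 0 < t i) →
    (∏ i ∈ Finset.Icc 1 (k-1),
        ((∑ j ∈ Finset.Icc 1 (i+1), t j) - 1).choose (∑ j ∈ Finset.Icc 1 i, t j))
      * ((∑ i ∈ Finset.Icc 1 k, t i)
          * (∏ i ∈ Finset.Icc 1 k, (t i).factorial)
          * ∏ i ∈ Finset.Icc 1 (k-1), ∑ j ∈ Finset.Icc 1 i, t j)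
    = (∑ i ∈ Finset.Icc 1 k, t i).factorial * ∏ i ∈ Finset.Icc 1 k, t i := by
  intro k hk
  induction k, hk using Nat.le_induction with
  | base =>
    intro hpos
    simp [Nat.mul_comm]
  | succ k hk IH =>
    intro hpos
    obtain ⟨j, rfl⟩ : ∃ j, k = j + 1 := ⟨k - 1, by omega⟩
    have IH' := IH (fun i hi => hpos i (by simp at hi ⊢; omega))
    simp only [Nat.add_sub_cancel] at IH' ⊢
    set m := ∑ i ∈ Finset.Icc 1 (j+1), t i with hm
    have hm0 : 0 < m := by
      have h1 : t 1 ≤ m := Finset.single_le_sum (f := t) (fun i _ => Nat.zero_le _) (by simp)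
      have := hpos 1 (by simp)
      omega
    have htk : 0 < t (j+1+1) := hpos (j+1+1) (by simp)
    set n := ∑ i ∈ Finset.Icc 1 (j+1+1), t i with hn
    have hn' : n = m + t (j+1+1) := by
      rw [hn, Finset.sum_Icc_succ_top (by omega : 1 ≤ j+1+1), ← hm]
    -- expand all the Icc 1 (j+1) products into Icc 1 j products times top terms
    rw [Finset.prod_Icc_succ_top (by omega : 1 ≤ j+1)
      (f := fun i => ((∑ j ∈ Finset.Icc 1 (i+1), t j) - 1).choose (∑ j ∈ Finset.Icc 1 i, t j))]
    rw [Finset.prod_Icc_succ_top (by omega : 1 ≤ j+1+1) (f := fun i => (t i).factorial)]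
    rw [Finset.prod_Icc_succ_top (by omega : 1 ≤ j+1) (f := fun i => ∑ j ∈ Finset.Icc 1 i, t j)]
    rw [Finset.prod_Icc_succ_top (by omega : 1 ≤ j+1+1) (f := fun i => t i)]
    have key : (n - 1).choose m * m.factorial * (t (j+1+1) - 1).factorial
        = (n - 1).factorial := by
      have h1 : n - 1 - m = t (j+1+1) - 1 := by omega
      have := Nat.choose_mul_factorial_mul_factorial (n := n - 1) (k := m) (by omega)
      rwa [h1] at this
    have hfac : (t (j+1+1)).factorial = t (j+1+1) * (t (j+1+1) - 1).factorial := by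
      have ht : t (j+1+1) - 1 + 1 = t (j+1+1) := by omega
      conv_lhs => rw [← ht]
      rw [Nat.factorial_succ, ht]
    have hnfac : n.factorial = n * (n - 1).factorial := by
      have hn1 : n - 1 + 1 = n := by omega
      conv_lhs => rw [← hn1]
      rw [Nat.factorial_succ, hn1]
    set P := ∏ i ∈ Finset.Icc 1 j,
        ((∑ j ∈ Finset.Icc 1 (i+1), t j) - 1).choose (∑ j ∈ Finset.Icc 1 i, t j) with hP
    set F := ∏ i ∈ Finset.Icc 1 (j+1), (t i).factorial with hF
    set M := ∏ i ∈ Finset.Icc 1 j, ∑ j' ∈ Finset.Icc 1 i, t j' with hM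
    set Tq := ∏ i ∈ Finset.Icc 1 (j+1), t i with hTq
    -- goal : P * (n-1).choose m * (n * (F * t!) * (M * m)) = n! * (Tq * t)
    have hsum2 : ∑ j_1 ∈ Finset.Icc 1 (j + 1 + 1), t j_1 = n := rfl
    rw [hsum2, hfac, hnfac]
    calc P * ((n-1).choose m) * (n * (F * (t (j+1+1) * (t (j+1+1) - 1).factorial)) * (M * m))
        = (P * (m * F * M)) * ((n-1).choose m * n * (t (j+1+1) * (t (j+1+1) - 1).factorial)) := by
          ring
      _ = (m.factorial * Tq) * ((n-1).choose m * n * (t (j+1+1) * (t (j+1+1) - 1).factorial)) := by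
          rw [IH']
      _ = ((n-1).choose m * m.factorial * (t (j+1+1) - 1).factorial) * (n * t (j+1+1) * Tq) := by
          ring
      _ = (n-1).factorial * (n * t (j+1+1) * Tq) := by rw [key]
      _ = n * (n-1).factorial * (Tq * t (j+1+1)) := by ring

theorem restricted_flag_count (n k : ℕ) (hn : 0 < n) (hk : 0 < k) (t : ℕ → ℕ)
    (hpos : ∀ i ∈ Finset.Icc 1 k, 0 < t i)
    (hsum : ∑ i ∈ Finset.Icc 1 k, t i = n) :
    (Nat.card {S : ℕ → Finset (Fin n) //
        S 0 = ∅ ∧ (∀ i, k ≤ i → S i = Finset.univ) ∧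
        (∀ i < k, S i ⊆ S (i + 1)) ∧
        (∀ i ∈ Finset.Icc 1 (k - 1), ∀ x ∈ S (i + 1),
            (∀ y ∈ S (i + 1), y ≤ x) → x ∉ S i) ∧
        (∀ i ∈ Finset.Icc 1 k, (S i \ S (i - 1)).card = t i)} : ℚ)
      = (1 / (n : ℚ))
          * ((n.factorial : ℚ) / ∏ i ∈ Finset.Icc 1 k, ((t i).factorial : ℚ))
          * (∏ i ∈ Finset.Icc 1 k, (t i : ℚ))
          / ∏ i ∈ Finset.Icc 1 (k - 1), ((∑ j ∈ Finset.Icc 1 i, t j : ℕ) : ℚ) := by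
  have hP := rflag_count t k hk n hn hpos hsum
  have hA := rflag_arith t k hk hpos
  rw [hsum] at hA
  show (Nat.card {S : ℕ → Finset (Fin n) // IsRFlag n k t S} : ℚ) = _
  rw [hP]
  have hFne : (∏ i ∈ Finset.Icc 1 k, ((t i).factorial : ℚ)) ≠ 0 := by
    apply Finset.prod_ne_zero_iff.2
    intro i _
    exact_mod_cast (Nat.factorial_pos _).ne'
  have hMprod : (∏ i ∈ Finset.Icc 1 (k-1), ((∑ j ∈ Finset.Icc 1 i, t j : ℕ) : ℚ)) ≠ 0 := by
    apply Finset.prod_ne_zero_iff.2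
    intro i hi
    simp only [Finset.mem_Icc] at hi
    have h1 : t 1 ≤ ∑ j ∈ Finset.Icc 1 i, t j :=
      Finset.single_le_sum (f := t) (fun j _ => Nat.zero_le _) (by simp; omega)
    have := hpos 1 (by simp; omega)
    exact_mod_cast (by omega : 0 < ∑ j ∈ Finset.Icc 1 i, t j).ne'
  have hnne : (n : ℚ) ≠ 0 := Nat.cast_ne_zero.2 hn.ne'
  have hAQ := congrArg (fun x : ℕ => (x : ℚ)) hA
  push_cast at hAQ hMprod hFne ⊢
  field_simp [hFne, hMprod, hnne]
  linear_combination hAQ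
end

section
/- For any composition t = (t_1,...,t_k) of n, the following product-of-binomials identity holds: ∏_{i=2}^{k} C([t]_i − 1, t_i − 1) = multinomial(n; t_1,...,t_k) · (t_1 t_2 ··· t_k) / ([t]_1 [t]_2 ··· [t]_k), where [t]_i = t_1 + ··· + t_i (so [t]_k = n). -/
lemma choose_cast_aux (a b : ℕ) (ha : 0 < a) (hb : 0 < b) :
    (((a + b - 1).choose (b - 1) : ℕ) : ℚ)
      = ((a + b).factorial : ℚ) / ((a.factorial : ℚ) * (b.factorial : ℚ))
          * (b : ℚ) / ((a : ℚ) + b) := by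
  have h1 : b - 1 ≤ a + b - 1 := by omega
  rw [Nat.cast_choose ℚ h1]
  have h2 : a + b - 1 - (b - 1) = a := by omega
  rw [h2]
  have hab : a + b = (a + b - 1) + 1 := by omega
  have hb' : b = (b - 1) + 1 := by omega
  have e1 : ((a + b).factorial : ℚ) = ((a : ℚ) + b) * ((a + b - 1).factorial : ℚ) := by
    rw [hab, Nat.factorial_succ]; push_cast; ring_nf; rw [Nat.cast_sub (by omega)]; push_cast; ring
  have e2 : ((b).factorial : ℚ) = (b : ℚ) * ((b - 1).factorial : ℚ) := by
    conv_lhs => rw [hb']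
    rw [Nat.factorial_succ, Nat.sub_add_cancel hb]; push_cast; ring
  rw [e1, e2]
  have hbne : (b : ℚ) ≠ 0 := by exact_mod_cast hb.ne'
  have habne : (a : ℚ) + b ≠ 0 := by positivity
  have hf1 : ((b - 1).factorial : ℚ) ≠ 0 := Nat.cast_ne_zero.mpr (Nat.factorial_ne_zero _)
  have hf2 : ((a).factorial : ℚ) ≠ 0 := Nat.cast_ne_zero.mpr (Nat.factorial_ne_zero _)
  have hf3 : ((a + b - 1).factorial : ℚ) ≠ 0 := Nat.cast_ne_zero.mpr (Nat.factorial_ne_zero _)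
  field_simp

set_option maxHeartbeats 1600000 in
lemma product_binomials_aux (k : ℕ) (hk : 0 < k) (t : ℕ → ℕ)
    (hpos : ∀ i ∈ Finset.Icc 1 k, 0 < t i) :
    ((∏ i ∈ Finset.Icc 2 k,
        ((∑ j ∈ Finset.Icc 1 i, t j) - 1).choose (t i - 1) : ℕ) : ℚ)
      = (((∑ i ∈ Finset.Icc 1 k, t i).factorial : ℚ)
            / ∏ i ∈ Finset.Icc 1 k, ((t i).factorial : ℚ))
          * (∏ i ∈ Finset.Icc 1 k, (t i : ℚ))
          / ∏ i ∈ Finset.Icc 1 k, ((∑ j ∈ Finset.Icc 1 i, t j : ℕ) : ℚ) := by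
  induction k with
  | zero => omega
  | succ k ih =>
    rcases Nat.eq_zero_or_pos k with rfl | hk'
    · simp only [Finset.Icc_self, Finset.prod_singleton, Finset.sum_singleton]
      have h1 : Finset.Icc 2 1 = (∅ : Finset ℕ) := by decide
      rw [h1]
      have ht : 0 < t 1 := hpos 1 (by decide)
      have htne : ((t 1 : ℚ)) ≠ 0 := by exact_mod_cast ht.ne'
      have hfne : ((t 1).factorial : ℚ) ≠ 0 := Nat.cast_ne_zero.mpr (Nat.factorial_ne_zero _)
      field_simp
      simp
    · have hsub : ∀ i ∈ Finset.Icc 1 k, 0 < t i := fun i hi => by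
        apply hpos; simp only [Finset.mem_Icc] at *; omega
      have IH := ih hk' hsub
      have h1 : 1 ≤ k + 1 := by omega
      have h2 : 2 ≤ k + 1 := by omega
      rw [show Finset.Icc 2 (k+1) = Finset.Icc 2 k ∪ {k+1} by
            rw [Finset.union_comm]
            ext x; simp only [Finset.mem_Icc, Finset.mem_union, Finset.mem_singleton]; omega,
          Finset.prod_union (by simp),
          show Finset.Icc 1 (k+1) = Finset.Icc 1 k ∪ {k+1} by
            rw [Finset.union_comm]
            ext x; simp only [Finset.mem_Icc, Finset.mem_union, Finset.mem_singleton]; omega,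
          Finset.prod_union (by simp), Finset.prod_union (by simp), Finset.prod_union (by simp),
          Finset.sum_union (by simp)]
      simp only [Finset.prod_singleton, Finset.sum_singleton]
      set S := ∑ i ∈ Finset.Icc 1 k, t i with hS
      have hSpos : 0 < S := by
        have := hsub 1 (by simp only [Finset.mem_Icc]; omega)
        calc 0 < t 1 := this
          _ ≤ S := Finset.single_le_sum (f := t) (fun i _ => Nat.zero_le _) (by simp only [Finset.mem_Icc]; omega)
      have htk : 0 < t (k+1) := hpos (k+1) (by simp)
      have key := choose_cast_aux S (t (k+1)) hSpos htk
      rw [show ((S:ℚ) + t (k+1)) = ((S + t (k+1) : ℕ) : ℚ) by push_cast; ring] at key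
      have hsum' : ∑ j ∈ Finset.Icc 1 (k+1), t j = S + t (k+1) := by
        rw [show Finset.Icc 1 (k+1) = Finset.Icc 1 k ∪ {k+1} by
              rw [Finset.union_comm]
              ext x; simp only [Finset.mem_Icc, Finset.mem_union, Finset.mem_singleton]; omega,
            Finset.sum_union (by simp), Finset.sum_singleton]
      rw [hsum', Nat.cast_mul, IH, key]
      -- nonzero facts
      have hSne : (S : ℚ) ≠ 0 := by exact_mod_cast hSpos.ne'
      have htkne : ((t (k+1) : ℚ)) ≠ 0 := by exact_mod_cast htk.ne'
      have hSfne : ((S).factorial : ℚ) ≠ 0 := Nat.cast_ne_zero.mpr (Nat.factorial_ne_zero _)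
      have htkfne : ((t (k+1)).factorial : ℚ) ≠ 0 := Nat.cast_ne_zero.mpr (Nat.factorial_ne_zero _)
      have hprodf : (∏ i ∈ Finset.Icc 1 k, ((t i).factorial : ℚ)) ≠ 0 :=
        Finset.prod_ne_zero_iff.mpr fun i _ => Nat.cast_ne_zero.mpr (Nat.factorial_ne_zero _)
      have hprodt : (∏ i ∈ Finset.Icc 1 k, ((t i : ℚ))) ≠ 0 :=
        Finset.prod_ne_zero_iff.mpr fun i hi => by
          exact_mod_cast (hsub i hi).ne'
      have hprodS : (∏ i ∈ Finset.Icc 1 k, ((∑ j ∈ Finset.Icc 1 i, t j : ℕ) : ℚ)) ≠ 0 := by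
        apply Finset.prod_ne_zero_iff.mpr
        intro i hi
        simp only [Finset.mem_Icc] at hi
        have : 0 < ∑ j ∈ Finset.Icc 1 i, t j := by
          have h1i : 1 ∈ Finset.Icc 1 i := by simp [hi.1]
          calc 0 < t 1 := hsub 1 (by simp only [Finset.mem_Icc]; omega)
            _ ≤ _ := Finset.single_le_sum (f := t) (fun j _ => Nat.zero_le _) h1i
        exact_mod_cast this.ne'
      have hSt : (((S + t (k+1) : ℕ)) : ℚ) ≠ 0 := by
        have : 0 < S + t (k+1) := by omega
        exact_mod_cast this.ne'
      set F : ℚ := ((S.factorial : ℚ)) with hF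
      set G : ℚ := (((S + t (k+1)).factorial : ℚ)) with hG
      set g : ℚ := (((S + t (k+1) : ℕ)) : ℚ) with hg
      set f : ℚ := (((t (k+1)).factorial : ℚ)) with hf
      set b : ℚ := ((t (k+1) : ℚ)) with hb
      set P : ℚ := (∏ i ∈ Finset.Icc 1 k, ((t i).factorial : ℚ)) with hP
      set T : ℚ := (∏ i ∈ Finset.Icc 1 k, ((t i : ℚ))) with hT
      set Q : ℚ := (∏ i ∈ Finset.Icc 1 k, ((∑ j ∈ Finset.Icc 1 i, t j : ℕ) : ℚ)) with hQ
      clear_value F G g f b P T Q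
      field_simp

theorem product_binomials_identity (n k : ℕ) (hn : 0 < n) (hk : 0 < k) (t : ℕ → ℕ)
    (hpos : ∀ i ∈ Finset.Icc 1 k, 0 < t i)
    (hsum : ∑ i ∈ Finset.Icc 1 k, t i = n) :
    ((∏ i ∈ Finset.Icc 2 k,
        ((∑ j ∈ Finset.Icc 1 i, t j) - 1).choose (t i - 1) : ℕ) : ℚ)
      = ((n.factorial : ℚ) / ∏ i ∈ Finset.Icc 1 k, ((t i).factorial : ℚ))
          * (∏ i ∈ Finset.Icc 1 k, (t i : ℚ))
          / ∏ i ∈ Finset.Icc 1 k, ((∑ j ∈ Finset.Icc 1 i, t j : ℕ) : ℚ) := by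
  subst hsum
  exact product_binomials_aux k hk t hpos
end

section
/- For fixed k ≥ 1 and n ≥ k, the coefficient of z^n/n! in T(z)^k/k! equals C(n,k) · k · n^{n-k-1}, where T(z) = Σ_{n≥1} n^{n-1} z^n/n! is the Cayley tree function. Equivalently, as an identity of formal power series, T(z)^k = Σ_{n≥k} k! · C(n,k) · k · n^{n-k-1} · z^n/n!. -/
open Finset Polynomial

-- alternating sum kills polynomials of low degree
lemma altsum : ∀ (d n : ℕ), d < n → ∀ c : ℚ,
    ∑ m ∈ range (n+1), (-1:ℚ)^m * (n.choose m : ℚ) * (c + m)^d = 0 := by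
  intro d
  induction d with
  | zero =>
    intro n hn c
    simp only [pow_zero, mul_one]
    have h := (add_pow (-1 : ℚ) 1 n).symm
    simp only [one_pow, mul_one, neg_add_cancel] at h
    rw [zero_pow (by omega)] at h
    simpa using h
  | succ d ih =>
    intro n hn c
    obtain ⟨N, rfl⟩ : ∃ N, n = N + 1 := ⟨n - 1, by omega⟩
    have expand : ∀ m : ℕ, (-1:ℚ)^m * ((N+1).choose m : ℚ) * (c + m)^(d+1)
        = c * ((-1:ℚ)^m * ((N+1).choose m : ℚ) * (c + m)^d)
          + (-1:ℚ)^m * ((N+1).choose m : ℚ) * m * (c + m)^d := by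
      intro m; rw [pow_succ]; ring
    rw [Finset.sum_congr rfl (fun m _ => expand m), Finset.sum_add_distrib, ← Finset.mul_sum,
      ih (N+1) (by omega) c, mul_zero, zero_add]
    rw [Finset.sum_range_succ']
    simp only [Nat.cast_zero, mul_zero, zero_mul, add_zero, Nat.cast_succ]
    have step : ∀ i : ℕ, (-1:ℚ)^(i+1) * (((N+1).choose (i+1) : ℚ)) * ((i:ℚ)+1) * (c + ((i:ℚ)+1))^d
        = -((N:ℚ)+1) * ((-1:ℚ)^i * ((N.choose i : ℚ)) * ((c+1) + i)^d) := by
      intro i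
      have h := Nat.add_one_mul_choose_eq N i
      have h' : (((N+1).choose (i+1) : ℚ)) * ((i:ℚ)+1) = ((N:ℚ)+1) * (N.choose i : ℚ) := by
        have := congrArg (fun z : ℕ => (z : ℚ)) h
        push_cast at this
        linarith [this]
      rw [pow_succ]
      calc (-1:ℚ)^i * (-1) * (((N+1).choose (i+1) : ℚ)) * ((i:ℚ)+1) * (c + ((i:ℚ)+1))^d
          = (-1) * (-1:ℚ)^i * ((((N+1).choose (i+1) : ℚ)) * ((i:ℚ)+1)) * (c + ((i:ℚ)+1))^d := by ring
        _ = -((N:ℚ)+1) * ((-1:ℚ)^i * ((N.choose i : ℚ)) * ((c+1) + i)^d) := by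
            rw [h']; ring_nf
    rw [Finset.sum_congr rfl (fun i _ => step i), ← Finset.mul_sum, ih N (by omega) (c+1), mul_zero]

lemma poly_anchor (p q : ℚ[X]) (h : derivative p = derivative q) (a : ℚ)
    (h2 : p.eval a = q.eval a) : p = q := by
  have hd : derivative (p - q) = 0 := by rw [derivative_sub, h, sub_self]
  have hc := Polynomial.eq_C_of_derivative_eq_zero hd
  have := congrArg (Polynomial.eval a) hc
  rw [eval_sub, h2, sub_self, eval_C] at this
  have h0 : p - q = 0 := by rw [hc, ← this, map_zero]
  exact sub_eq_zero.mp h0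

noncomputable def bb (x : ℚ) (m : ℕ) : ℚ := if m = 0 then 1 else x * (x + m)^(m-1)

lemma abel1 : ∀ (n : ℕ) (x y : ℚ),
    ∑ m ∈ range (n+1), C ((n.choose m : ℚ) * bb x m) * (X + C (y + ((n - m : ℕ) : ℚ)))^(n - m)
      = (X + C (x + y + n))^n := by
  intro n
  induction n with
  | zero => intro x y; simp [bb]
  | succ n ih =>
    intro x y
    refine poly_anchor _ _ ?_ (-(x + y + (n+1))) ?_
    · -- derivatives agree
      rw [derivative_X_add_C_pow]
      rw [derivative_sum]
      rw [Finset.sum_range_succ]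
      have hlast : derivative (C (((n+1).choose (n+1) : ℚ) * bb x (n+1))
          * (X + C (y + (((n+1) - (n+1) : ℕ) : ℚ)))^((n+1) - (n+1)) ) = 0 := by
        simp
      rw [hlast, add_zero]
      have hterm : ∀ m ∈ range (n+1),
          derivative (C (((n+1).choose m : ℚ) * bb x m)
            * (X + C (y + (((n+1) - m : ℕ) : ℚ)))^((n+1) - m))
          = C ((n+1 : ℚ)) * (C ((n.choose m : ℚ) * bb x m)
              * (X + C ((y+1) + ((n - m : ℕ) : ℚ)))^(n - m)) := by
        intro m hm
        rw [Finset.mem_range] at hm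
        have h1 : (n+1) - m = (n - m) + 1 := by omega
        have h2 : (((n+1) - m : ℕ) : ℚ) = ((n - m : ℕ) : ℚ) + 1 := by
          rw [h1]; push_cast; ring
        have hch : (((n+1).choose m : ℚ)) * (((n-m : ℕ):ℚ) + 1) = ((n+1:ℚ)) * (n.choose m : ℚ) := by
          have h5 := Nat.choose_mul_succ_eq n m
          have h3 : ((n.choose m : ℚ)) * ((n:ℚ)+1) = (((n+1).choose m : ℚ)) * ((n + 1 - m : ℕ) : ℚ) := by
            exact_mod_cast congrArg (fun z : ℕ => (z:ℚ)) h5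
          rw [h2] at h3
          linarith
        rw [derivative_C_mul, derivative_X_add_C_pow, h1]
        simp only [Nat.add_sub_cancel]
        have h2' : ((n - m + 1 : ℕ) : ℚ) = ((n - m : ℕ) : ℚ) + 1 := by push_cast; ring
        rw [h2']
        have : (y + (((n - m : ℕ) : ℚ) + 1)) = ((y+1) + ((n - m : ℕ) : ℚ)) := by ring
        rw [this]
        rw [← mul_assoc, ← mul_assoc, ← C_mul, ← C_mul]
        congr 2
        linear_combination bb x m * hch
      rw [Finset.sum_congr rfl hterm, ← Finset.mul_sum, ih x (y+1)]
      congr 2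
      · push_cast; ring
      · push_cast; ring_nf
    · -- evaluation at the root
      rw [eval_pow, eval_add, eval_X, eval_C, eval_finset_sum]
      have : -(x + y + ((n:ℚ)+1)) + (x + y + ((n+1 : ℕ):ℚ)) = 0 := by push_cast; ring
      rw [show ((n+1 : ℕ):ℚ) = (n:ℚ)+1 by push_cast; ring] at *
      rw [show (-(x + y + ((n:ℚ)+1)) + (x + y + ((n:ℚ)+1))) = 0 by ring, zero_pow (by omega)]
      have hterm : ∀ m ∈ range (n+1+1),
          Polynomial.eval (-(x + y + ((n:ℚ)+1)))
            (C (((n+1).choose m : ℚ) * bb x m) * (X + C (y + (((n+1) - m : ℕ) : ℚ)))^((n+1) - m))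
          = (-1:ℚ)^(n+1) * x * ((-1:ℚ)^m * (((n+1).choose m : ℚ)) * (x + m)^n) := by
        intro m hm
        rw [Finset.mem_range] at hm
        have hm' : m ≤ n + 1 := by omega
        rw [eval_mul, eval_C, eval_pow, eval_add, eval_X, eval_C]
        have hbase : -(x + y + ((n:ℚ)+1)) + (y + (((n+1) - m : ℕ) : ℚ)) = -(x + m) := by
          rw [Nat.cast_sub hm']; push_cast; ring
        rw [hbase, neg_pow]
        have hb : bb x m * (x + m)^((n+1) - m) = x * (x + m)^n := by
          unfold bb
          by_cases h0 : m = 0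
          · subst h0; simp [pow_succ']
          · rw [if_neg h0, mul_assoc, ← pow_add]
            congr 2
            omega
        have hsgn : (-1:ℚ)^((n+1) - m) = (-1:ℚ)^(n+1) * (-1:ℚ)^m := by
          have : (-1:ℚ)^((n+1) - m) * (-1:ℚ)^m = (-1:ℚ)^(n+1) := by
            rw [← pow_add, Nat.sub_add_cancel hm']
          have hsq : (-1:ℚ)^m * (-1:ℚ)^m = 1 := by
            rw [← mul_pow]; norm_num
          calc (-1:ℚ)^((n+1) - m) = (-1:ℚ)^((n+1) - m) * ((-1:ℚ)^m * (-1:ℚ)^m) := by rw [hsq, mul_one]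
            _ = ((-1:ℚ)^((n+1) - m) * (-1:ℚ)^m) * (-1:ℚ)^m := by ring
            _ = (-1:ℚ)^(n+1) * (-1:ℚ)^m := by rw [this]
        calc (((n+1).choose m : ℚ) * bb x m) * ((-1:ℚ)^((n+1)-m) * (x+m)^((n+1)-m))
            = (-1:ℚ)^((n+1)-m) * (((n+1).choose m : ℚ)) * (bb x m * (x+m)^((n+1)-m)) := by ring
          _ = (-1:ℚ)^(n+1) * x * ((-1:ℚ)^m * (((n+1).choose m : ℚ)) * (x + m)^n) := by
              rw [hb, hsgn]; ring
      rw [Finset.sum_congr rfl hterm, ← Finset.mul_sum, altsum n (n+1) (by omega) x, mul_zero]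

lemma key' : ∀ j : ℕ, ((j:ℚ)+1)^j = ((j:ℚ)+1)^j * ((j:ℚ)+1)
    - (((j:ℚ)+1)) * ((1 + (j:ℚ))^(j-1) * (j:ℚ)) := by
  intro j
  cases j with
  | zero => norm_num
  | succ i =>
    push_cast
    rw [show (1+((i:ℚ)+1)) = ((i:ℚ)+1+1) by ring]
    simp only [pow_succ]
    ring

lemma abel3 (N : ℕ) (x : ℚ) :
    ∑ m ∈ range (N+1), (((N+1).choose m : ℚ)) * bb x m * ((((N+1) - m : ℕ) : ℚ))^((N+1) - m - 1)
      = ((N:ℚ)+1) * (x + ((N+1:ℕ):ℚ))^N - ((N:ℚ)+1) * (N:ℚ) * (x + ((N+1:ℕ):ℚ))^(N-1) := by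
  have E1 := congrArg (fun p => Polynomial.coeff p 1) (abel1 (N+1) x 0)
  have E2 := congrArg (fun p => Polynomial.coeff p 1) (abel1 N x 1)
  simp only [Polynomial.finset_sum_coeff, Polynomial.coeff_C_mul, Polynomial.coeff_X_add_C_pow,
    Nat.choose_one_right] at E1 E2
  -- drop the last (zero) term of E1
  rw [Finset.sum_range_succ] at E1
  have hz : (((N+1).choose (N+1) : ℚ)) * bb x (N+1)
      * ((0 + (((N+1) - (N+1) : ℕ) : ℚ))^((N+1) - (N+1) - 1) * (((N+1) - (N+1) : ℕ) : ℚ)) = 0 := by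
    simp
  rw [hz, add_zero] at E1
  have termid : ∀ m ∈ range (N+1),
      (((N+1).choose m : ℚ)) * bb x m * ((((N+1) - m : ℕ) : ℚ))^((N+1) - m - 1)
      = (((N+1).choose m : ℚ)) * bb x m
          * ((0 + (((N+1) - m : ℕ) : ℚ))^((N+1) - m - 1) * (((N+1) - m : ℕ) : ℚ))
        - ((N:ℚ)+1) * ((N.choose m : ℚ) * bb x m
          * ((1 + ((N - m : ℕ) : ℚ))^(N - m - 1) * ((N - m : ℕ) : ℚ))) := by
    intro m hm
    rw [Finset.mem_range] at hm
    have hmN : m ≤ N := by omega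
    set j := N - m with hj
    have e1 : (N+1) - m = j + 1 := by omega
    have hch : ((N:ℚ)+1) * (N.choose m : ℚ) = (((N+1).choose m : ℚ)) * ((j:ℚ)+1) := by
      have h5 := Nat.choose_mul_succ_eq N m
      have h3 : ((N.choose m : ℚ)) * ((N:ℚ)+1) = (((N+1).choose m : ℚ)) * ((N + 1 - m : ℕ) : ℚ) := by
        exact_mod_cast congrArg (fun z : ℕ => (z:ℚ)) h5
      rw [e1] at h3
      push_cast at h3 ⊢
      linarith
    rw [e1]
    simp only [Nat.add_sub_cancel, zero_add]
    have hcast : ((j + 1 : ℕ) : ℚ) = (j:ℚ) + 1 := by push_cast; ring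
    rw [hcast]
    have key := key' j
    calc (((N+1).choose m : ℚ)) * bb x m * ((j:ℚ)+1)^j
        = (((N+1).choose m : ℚ)) * bb x m * (((j:ℚ)+1)^j * ((j:ℚ)+1)
            - (((j:ℚ)+1)) * ((1 + (j:ℚ))^(j-1) * (j:ℚ))) := by rw [← key]
      _ = _ := by linear_combination ((1 + (j:ℚ))^(j-1) * (j:ℚ)) * bb x m * hch
  rw [Finset.sum_congr rfl termid, Finset.sum_sub_distrib, ← Finset.mul_sum, E1, E2]
  push_cast
  ring

noncomputable def TT : PowerSeries ℚ :=
  PowerSeries.mk fun m => if m = 0 then (0:ℚ) else (m:ℚ)^(m-1)/m.factorial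

noncomputable def ff (k n : ℕ) : ℚ :=
  if n < k then 0 else (k:ℚ) * (n:ℚ)^(n-k) / ((n:ℚ) * ((n-k).factorial : ℚ))

lemma key : ∀ k, 1 ≤ k → ∀ n, PowerSeries.coeff (R := ℚ) n (TT^k) = ff k n := by
  intro k hk
  induction k, hk using Nat.le_induction with
  | base =>
    intro n
    rw [pow_one]
    unfold TT ff
    rw [PowerSeries.coeff_mk]
    cases n with
    | zero => simp
    | succ m =>
      have h1 : ¬ (m + 1 < 1) := by omega
      rw [if_neg (by omega : ¬ (m+1 = 0)), if_neg h1]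
      rw [Nat.factorial_succ]
      push_cast
      ring
  | succ k hk ih =>
    intro n
    have hsum : PowerSeries.coeff (R := ℚ) n (TT^(k+1))
        = ∑ m ∈ range (n+1),
            (if m = 0 then (0:ℚ) else (m:ℚ)^(m-1)/m.factorial) * ff k (n - m) := by
      rw [pow_succ', PowerSeries.coeff_mul, Finset.Nat.sum_antidiagonal_eq_sum_range_succ_mk]
      exact Finset.sum_congr rfl fun m _ => by rw [ih (n - m)]; unfold TT; rw [PowerSeries.coeff_mk]
    rw [hsum]
    by_cases hnk : n < k + 1
    · rw [ff, if_pos hnk]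
      apply Finset.sum_eq_zero
      intro m hm
      by_cases h0 : m = 0
      · rw [if_pos h0, zero_mul]
      · rw [ff, if_pos (by omega : n - m < k), mul_zero]
    · -- main case
      obtain ⟨M, rfl⟩ : ∃ M, n = M + 1 + k := ⟨n - k - 1, by omega⟩
      set g : ℕ → ℚ := fun m =>
        (if m = 0 then (0:ℚ) else (m:ℚ)^(m-1)/m.factorial) * ff k (M + 1 + k - m) with hg
      have step1 : ∑ m ∈ range (M+1+k+1), g m = ∑ m ∈ range (M+2), g m := by
        symm
        apply Finset.sum_subset
        · apply Finset.range_subset_range.mpr; omega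
        · intro m hm hm'
          rw [Finset.mem_range] at hm hm'
          have : M + 1 + k - m < k := by omega
          have hz : ff k (M + 1 + k - m) = 0 := by rw [ff, if_pos this]
          rw [hg]; simp only [hz, mul_zero]
      have step2 : ∑ m ∈ range (M+2), g m = ∑ j ∈ range (M+2), g (M + 1 - j) := by
        exact (Finset.sum_range_reflect g (M+2)).symm
      have step3 : ∑ j ∈ range (M+2), g (M + 1 - j) = ∑ j ∈ range (M+1), g (M + 1 - j) := by
        rw [Finset.sum_range_succ]
        have : g (M + 1 - (M+1)) = 0 := by
          rw [hg]; simp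
        rw [this, add_zero]
      have step4 : ∀ j ∈ range (M+1),
          g (M + 1 - j) = (((M+1).choose j : ℚ)) * bb (k:ℚ) j
            * ((((M+1) - j : ℕ) : ℚ))^((M+1) - j - 1) / ((M+1).factorial : ℚ) := by
        intro j hj
        rw [Finset.mem_range] at hj
        have hjM : j ≤ M := by omega
        have hm0 : ¬ (M + 1 - j = 0) := by omega
        have hnm : M + 1 + k - (M + 1 - j) = k + j := by omega
        have hkj : ¬ (k + j < k) := by omega
        have hkj2 : k + j - k = j := by omega
        rw [hg]
        simp only [if_neg hm0, hnm, ff, if_neg hkj, hkj2]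
        have hne : ((k:ℚ) + j) ≠ 0 := by
          have : (0:ℚ) < (k:ℚ) + j := by push_cast; positivity
          · linarith
        have hfacts : ((M+1-j).factorial : ℚ) ≠ 0 ∧ (j.factorial : ℚ) ≠ 0
            ∧ (((M+1).factorial : ℚ)) ≠ 0 := by
          refine ⟨?_, ?_, ?_⟩ <;> exact_mod_cast Nat.factorial_ne_zero _
        have hchoose : (((M+1).choose j : ℚ)) = ((M+1).factorial : ℚ)
            / ((j.factorial : ℚ) * ((M+1-j).factorial : ℚ)) := by
          rw [Nat.cast_choose ℚ (by omega : j ≤ M + 1)]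
        have hcast : ((k + j : ℕ) : ℚ) = (k:ℚ) + j := by push_cast; ring
        rw [hcast]
        rw [hchoose]
        rw [bb]
        by_cases hj0 : j = 0
        · subst hj0
          simp only [if_pos rfl, pow_zero, Nat.cast_zero, add_zero, Nat.sub_zero,
            Nat.factorial_zero, Nat.cast_one]
          field_simp
          simp
        · rw [if_neg hj0]
          have hpow : ((k:ℚ) + j)^j = ((k:ℚ) + j)^(j-1) * ((k:ℚ) + j) := by
            rw [← pow_succ, Nat.sub_add_cancel (by omega : 1 ≤ j)]
          rw [hpow]
          field_simp
      have step5 : ∑ j ∈ range (M+1), g (M + 1 - j)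
          = (((M:ℚ)+1) * ((k:ℚ) + ((M+1:ℕ):ℚ))^M
              - ((M:ℚ)+1) * (M:ℚ) * ((k:ℚ) + ((M+1:ℕ):ℚ))^(M-1)) / ((M+1).factorial : ℚ) := by
        rw [Finset.sum_congr rfl step4, ← Finset.sum_div, abel3 M (k:ℚ)]
      rw [step1, step2, step3, step5]
      -- final algebra
      rw [ff, if_neg (by omega : ¬ (M + 1 + k < k + 1))]
      have hsub : M + 1 + k - (k+1) = M := by omega
      rw [hsub]
      have hn : ((M+1+k : ℕ) : ℚ) = (M:ℚ) + 1 + k := by push_cast; ring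
      have hn1 : ((M+1 : ℕ) : ℚ) = (M:ℚ) + 1 := by push_cast; ring
      rw [hn, hn1]
      have hfac : (((M+1).factorial : ℕ) : ℚ) = ((M:ℚ)+1) * (M.factorial : ℚ) := by
        rw [Nat.factorial_succ]; push_cast; ring
      rw [hfac]
      have hMfac : (M.factorial : ℚ) ≠ 0 := by exact_mod_cast Nat.factorial_ne_zero M
      have hnne : (M:ℚ) + 1 + k ≠ 0 := by
        have : (0:ℚ) < (M:ℚ) + 1 + k := by positivity
        linarith
      cases M with
      | zero => norm_num; field_simp; ring
      | succ i =>
        push_cast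
        rw [show ((k:ℚ) + ((i:ℚ)+1+1)) = ((i:ℚ)+1+1+(k:ℚ)) by ring]
        rw [pow_succ ((i:ℚ)+1+1+(k:ℚ)) i]
        field_simp
        ring

theorem cayley_power_coeff (k : ℕ) (hk : 1 ≤ k) (n : ℕ) (hn : k ≤ n) :
    (n.factorial : ℚ)
        * PowerSeries.coeff (R := ℚ) n
            ((PowerSeries.mk fun m => if m = 0 then (0 : ℚ)
                else (m : ℚ) ^ (m - 1) / m.factorial) ^ k)
        / (k.factorial : ℚ)
      = (n.choose k : ℚ) * k * (n : ℚ) ^ ((n : ℤ) - k - 1) := by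
  have hT : (PowerSeries.mk fun m => if m = 0 then (0:ℚ) else (m:ℚ)^(m-1)/m.factorial) = TT := rfl
  rw [hT, key k hk n, ff, if_neg (by omega : ¬ n < k)]
  have hzn : ((n:ℚ)) ≠ 0 := Nat.cast_ne_zero.mpr (by omega)
  have hexp : (n:ℤ) - k - 1 = ((n - k : ℕ) : ℤ) - 1 := by omega
  rw [hexp, zpow_sub_one₀ hzn, zpow_natCast, Nat.cast_choose ℚ hn]
  have h1 : ((n.factorial : ℕ) : ℚ) ≠ 0 := by exact_mod_cast Nat.factorial_ne_zero n
  have h2 : ((k.factorial : ℕ) : ℚ) ≠ 0 := by exact_mod_cast Nat.factorial_ne_zero k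
  have h3 : (((n-k).factorial : ℕ) : ℚ) ≠ 0 := by exact_mod_cast Nat.factorial_ne_zero (n-k)
  field_simp
end

section
/- The tree record numbers satisfy the recurrence R_•(n,k) = Σ_{i=k−1}^{n−1} C(n−1, i) · R_•(i, k−1) · (n−i)^{n−i−2} · i for n ≥ 1 and 2 ≤ k ≤ n, with R_•(n,1) = n^{n−2} for n ≥ 1 and R_•(n,k) = 0 otherwise. Equivalently, taking the closed form R_•(n,k) = k·(n−1)···(n−k+1)·n^{n−k−1}, the identity k·(n−1)···(n−k+1)·n^{n−k−1} = Σ_{i=k−1}^{n−1} C(n−1,i) · (k−1)·(i−1)···(i−k+2)·i^{i−k} · (n−i)^{n−i−2} · i holds for 2 ≤ k ≤ n. -/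
open Finset

lemma tri (n : ℕ) (f : ℕ → ℕ → ℚ) :
    ∑ k ∈ range (n+1), ∑ t ∈ range (n+1-k), f k t
      = ∑ s ∈ range (n+1), ∑ k ∈ range (s+1), f k (s-k) := by
  have h1 : ∀ k, ∑ t ∈ range (n+1-k), f k t = ∑ s ∈ Ico k (n+1), f k (s-k) := by
    intro k
    rw [Finset.sum_Ico_eq_sum_range]
    exact Finset.sum_congr rfl fun t _ => by rw [Nat.add_sub_cancel_left]
  calc ∑ k ∈ range (n+1), ∑ t ∈ range (n+1-k), f k t
      = ∑ k ∈ Ico 0 (n+1), ∑ s ∈ Ico k (n+1), f k (s-k) := by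
        rw [Nat.Ico_zero_eq_range]
        exact Finset.sum_congr rfl fun k _ => h1 k
    _ = ∑ s ∈ Ico 0 (n+1), ∑ k ∈ Ico 0 (s+1), f k (s-k) :=
        Finset.sum_Ico_Ico_comm 0 (n+1) (fun k s => f k (s-k))
    _ = ∑ s ∈ range (n+1), ∑ k ∈ range (s+1), f k (s-k) := by
        simp [Nat.Ico_zero_eq_range]

lemma findiff' : ∀ m : ℕ, ∀ d : ℕ, d < m → ∀ x : ℚ,
    ∑ k ∈ range (m + 1), (-1 : ℚ) ^ k * (m.choose k) * (x + k) ^ d = 0 := by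
  intro m
  induction m with
  | zero => omega
  | succ m ih =>
    intro d hd x
    set G : ℕ → ℚ := fun k => (-1 : ℚ) ^ k * (m.choose k) * (x + k) ^ d with hG
    set A : ℚ := ∑ k ∈ range (m + 1), G k with hA
    set B : ℚ := ∑ k ∈ range (m + 1), (-1 : ℚ) ^ k * (m.choose k) * (x + (k+1)) ^ d with hB
    have claim2 : ∑ k ∈ range (m + 1), (-1 : ℚ) ^ (k+1) * (m.choose (k+1)) * (x + (k+1)) ^ d
        = A - G 0 := by
      have h1 : ∑ k ∈ range (m + 2), G k = A + G (m+1) := Finset.sum_range_succ G (m+1)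
      have h2 : ∑ k ∈ range (m + 2), G k
          = (∑ k ∈ range (m + 1), G (k+1)) + G 0 := Finset.sum_range_succ' G (m+1)
      have h3 : G (m+1) = 0 := by
        simp [hG, Nat.choose_succ_self]
      have h4 : ∑ k ∈ range (m + 1), G (k+1) = A - G 0 := by linarith
      simpa [hG] using h4
    have key : ∑ k ∈ range (m + 2), (-1 : ℚ) ^ k * ((m+1).choose k) * (x + k) ^ d
        = A - B := by
      rw [Finset.sum_range_succ' (fun k => (-1 : ℚ) ^ k * ((m+1).choose k) * (x + k) ^ d)]
      have hterm : ∀ k, (-1 : ℚ) ^ (k+1) * ((m+1).choose (k+1)) * (x + ((k:ℕ)+1:ℕ)) ^ d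
          = (-1 : ℚ) ^ (k+1) * (m.choose (k+1)) * (x + (k+1)) ^ d
            - (-1 : ℚ) ^ k * (m.choose k) * (x + (k+1)) ^ d := by
        intro k
        rw [Nat.choose_succ_succ]
        push_cast
        ring
      rw [Finset.sum_congr rfl (fun k _ => hterm k), Finset.sum_sub_distrib, claim2]
      have h0 : G 0 = x ^ d := by simp [hG]
      have hBr : ∑ k ∈ range (1 + m), (-1 : ℚ) ^ k * (m.choose k) * (x + (k+1)) ^ d = B := by
        rw [hB, Nat.add_comm 1 m]
      push_cast
      rw [← hB, h0]
      simp only [Nat.choose_zero_right, Nat.cast_one]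
      ring
    rw [key]
    rcases Nat.eq_zero_or_pos d with hd0 | hd0
    · subst hd0
      have : A = B := by
        rw [hA, hB]
        exact Finset.sum_congr rfl fun k _ => by simp [hG]
      linarith
    · have hdiff : ∀ k : ℕ, (x + ((k : ℚ) + 1)) ^ d - (x + k) ^ d
          = ∑ j ∈ range d, (d.choose j : ℚ) * (x + k) ^ j := by
        intro k
        have h := add_pow (x + (k : ℚ)) 1 d
        rw [Finset.sum_range_succ] at h
        simp only [one_pow, mul_one, Nat.choose_self, Nat.cast_one] at h
        have : x + ((k : ℚ) + 1) = x + (k : ℚ) + 1 := by ring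
        rw [this, h]
        rw [Finset.sum_congr rfl (fun j _ => by ring :
          ∀ j ∈ range d, (x + (k:ℚ)) ^ j * (d.choose j : ℚ) = (d.choose j : ℚ) * (x + k) ^ j)]
        ring
      have hBA : B - A = ∑ k ∈ range (m + 1), ∑ j ∈ range d,
          (-1 : ℚ) ^ k * (m.choose k) * ((d.choose j : ℚ) * (x + k) ^ j) := by
        rw [hB, hA, ← Finset.sum_sub_distrib]
        refine Finset.sum_congr rfl fun k _ => ?_
        rw [← Finset.mul_sum, ← hdiff k]
        simp only [hG]
        ring
      have hz : B - A = 0 := by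
        rw [hBA, Finset.sum_comm]
        refine Finset.sum_eq_zero fun j hj => ?_
        have hj' : j < m := by
          have := Finset.mem_range.mp hj
          omega
        have h := ih j hj' x
        calc ∑ k ∈ range (m + 1), (-1 : ℚ) ^ k * (m.choose k) * ((d.choose j : ℚ) * (x + k) ^ j)
            = (d.choose j : ℚ) * ∑ k ∈ range (m + 1), (-1 : ℚ) ^ k * (m.choose k) * (x + k) ^ j := by
              rw [Finset.mul_sum]
              exact Finset.sum_congr rfl fun k _ => by ring
          _ = 0 := by rw [h, mul_zero]
      linarith

lemma abel (m : ℕ) (x y : ℚ) (hx : 0 < x) :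
    ∑ k ∈ range (m+1), (m.choose k : ℚ) * (x + k) ^ ((k:ℤ) - 1) * (y + ((m - k : ℕ) : ℚ)) ^ (m - k)
      = x⁻¹ * (x + y + m) ^ m := by
  have hxk : ∀ k : ℕ, x + (k:ℚ) ≠ 0 := fun k => by positivity
  set f : ℕ → ℕ → ℚ := fun k t =>
    (m.choose k : ℚ) * ((m-k).choose t : ℚ) * (-1)^t * (x+(k:ℚ))^(((k+t:ℕ):ℤ)-1)
      * (x+y+m)^(m-k-t) with hf
  have step1 : ∀ k ∈ range (m+1),
      (m.choose k : ℚ) * (x + k) ^ ((k:ℤ) - 1) * (y + ((m - k : ℕ) : ℚ)) ^ (m - k)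
        = ∑ t ∈ range (m+1-k), f k t := by
    intro k hk
    have hkm : k ≤ m := by simpa [Nat.lt_succ_iff] using hk
    have hbase : y + ((m - k : ℕ) : ℚ) = (x+y+m) + (-(x+k)) := by
      have : ((m - k : ℕ) : ℚ) = (m:ℚ) - k := by
        push_cast [hkm]; ring
      rw [this]; ring
    rw [hbase, add_pow]
    rw [Finset.mul_sum]
    rw [← Finset.sum_range_reflect]
    have hrange : m - k + 1 = m + 1 - k := by omega
    rw [hrange]
    refine Finset.sum_congr rfl fun t ht => ?_
    have htmk : t ≤ m - k := by
      have := Finset.mem_range.mp ht; omega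
    have e0 : m + 1 - k - 1 - t = m - k - t := by omega
    have e3 : m - k - (m - k - t) = t := by omega
    rw [e0, e3, Nat.choose_symm htmk]
    have e4 : (-(x+(k:ℚ)))^t = (-1:ℚ)^t * (x+k)^t := by
      rw [neg_pow]
    rw [e4]
    simp only [hf]
    have e5 : (x+(k:ℚ))^(((k+t:ℕ):ℤ)-1) = (x+k)^((k:ℤ)-1) * (x+k)^t := by
      rw [show ((k+t:ℕ):ℤ)-1 = ((k:ℤ)-1)+(t:ℤ) by push_cast; ring,
        zpow_add₀ (hxk k), zpow_natCast]
    rw [e5]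
    ring
  rw [Finset.sum_congr rfl step1, tri]
  rw [Finset.sum_eq_single_of_mem 0 (Finset.mem_range.mpr (Nat.succ_pos m))]
  · simp only [hf]
    simp [zpow_neg, hx.ne']
  · intro s hs hs0
    have hsm : s ≤ m := by simpa [Nat.lt_succ_iff] using hs
    have hs1 : 1 ≤ s := Nat.one_le_iff_ne_zero.mpr hs0
    have inner : ∀ k ∈ range (s+1), f k (s-k)
        = ((x+y+m)^(m-s) * (m.choose s : ℚ) * (-1)^s)
          * ((-1:ℚ)^k * (s.choose k : ℚ) * (x+k)^(s-1)) := by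
      intro k hk
      have hks : k ≤ s := by simpa [Nat.lt_succ_iff] using hk
      have c1 : k + (s - k) = s := by omega
      have c2 : m - k - (s - k) = m - s := by omega
      have c3 : (m.choose k : ℚ) * ((m-k).choose (s-k) : ℚ)
          = (m.choose s : ℚ) * (s.choose k : ℚ) := by
        have := Nat.choose_mul (n := m) (k := s) (s := k) hks
        exact_mod_cast (by exact_mod_cast this.symm)
      have c4 : ((-1:ℚ))^(s-k) = (-1:ℚ)^s * (-1:ℚ)^k := by
        have h1 : ((-1:ℚ))^(s-k) * (-1:ℚ)^k = (-1:ℚ)^s := by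
          rw [← pow_add]; congr 1; omega
        have h2 : ((-1:ℚ))^k * (-1:ℚ)^k = 1 := by
          rw [← mul_pow]; norm_num
        calc ((-1:ℚ))^(s-k) = ((-1:ℚ))^(s-k) * (((-1:ℚ))^k * (-1:ℚ)^k) := by rw [h2, mul_one]
          _ = (-1:ℚ)^s * (-1:ℚ)^k := by rw [← mul_assoc, h1]
      have c5 : (x+(k:ℚ))^(((k+(s-k):ℕ):ℤ)-1) = (x+k)^(s-1 : ℕ) := by
        rw [c1, show ((s:ℕ):ℤ)-1 = ((s-1:ℕ):ℤ) by omega, zpow_natCast]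
      simp only [hf]
      rw [c2, c4, c5]
      rw [show ((m.choose k : ℚ) * ((m-k).choose (s-k) : ℚ)) = ((m.choose s : ℚ) * (s.choose k : ℚ)) from c3]
      ring
    rw [Finset.sum_congr rfl inner, ← Finset.mul_sum]
    rw [findiff' s (s-1) (by omega) x, mul_zero]

lemma hurwitz (m : ℕ) (x : ℚ) (hx : 0 < x) :
    ∑ k ∈ range (m+1), (m.choose k : ℚ) * (x + k) ^ ((k:ℤ) - 1)
        * (1 + ((m - k : ℕ) : ℚ)) ^ ((m:ℤ) - k - 1)
      = (x + 1) * x⁻¹ * (x + 1 + m) ^ ((m:ℤ) - 1) := by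
  rcases Nat.eq_zero_or_pos m with hm | hm
  · subst hm
    simp [zpow_neg, hx.ne']
    field_simp
  · have hb : ∀ k : ℕ, (0:ℚ) < 1 + ((m - k : ℕ) : ℚ) := fun k => by positivity
    have split : ∀ k ∈ range (m+1),
        (m.choose k : ℚ) * (x + k) ^ ((k:ℤ) - 1) * (1 + ((m - k : ℕ) : ℚ)) ^ (m - k)
          = (m.choose k : ℚ) * (x + k) ^ ((k:ℤ) - 1)
              * (1 + ((m - k : ℕ) : ℚ)) ^ ((m:ℤ) - k - 1)
            + (m.choose k : ℚ) * ((m - k : ℕ) : ℚ) * (x + k) ^ ((k:ℤ) - 1)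
              * (1 + ((m - k : ℕ) : ℚ)) ^ ((m:ℤ) - k - 1) := by
      intro k hk
      have hkm : k ≤ m := by simpa [Nat.lt_succ_iff] using hk
      have e1 : ((m - k : ℕ) : ℤ) = (m:ℤ) - k := by omega
      have e2 : (1 + ((m - k : ℕ) : ℚ)) ^ (m - k)
          = (1 + ((m - k : ℕ) : ℚ)) ^ ((m:ℤ) - k - 1) * (1 + ((m - k : ℕ) : ℚ)) := by
        rw [← zpow_natCast, e1, show (m:ℤ) - k = ((m:ℤ) - k - 1) + 1 by ring,
          zpow_add₀ (hb k).ne', zpow_one]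
        norm_num
      rw [e2]
      ring
    have hA := abel m x 1 hx
    rw [Finset.sum_congr rfl split, Finset.sum_add_distrib] at hA
    have hS2 : ∑ k ∈ range (m+1), (m.choose k : ℚ) * ((m - k : ℕ) : ℚ)
          * (x + k) ^ ((k:ℤ) - 1) * (1 + ((m - k : ℕ) : ℚ)) ^ ((m:ℤ) - k - 1)
        = (m:ℚ) * (x⁻¹ * (x + 2 + ((m-1:ℕ):ℚ)) ^ (m-1)) := by
      rw [Finset.sum_range_succ]
      simp only [Nat.sub_self, Nat.cast_zero, mul_zero, zero_mul, add_zero]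
      have hA' := abel (m-1) x 2 hx
      rw [show m - 1 + 1 = m by omega] at hA'
      rw [← hA', Finset.mul_sum]
      refine Finset.sum_congr rfl fun k hk => ?_
      have hkm : k < m := Finset.mem_range.mp hk
      have cnat : (m:ℚ) * ((m-1).choose k : ℚ) = (m.choose k : ℚ) * ((m - k : ℕ) : ℚ) := by
        have h1 := Nat.add_one_mul_choose_eq (m-1) k
        rw [show m - 1 + 1 = m by omega] at h1
        have h2 := Nat.choose_succ_right_eq m k
        have : m * (m-1).choose k = m.choose k * (m - k) := by rw [h1, h2]
        exact_mod_cast this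
      have e3 : (m:ℤ) - k - 1 = ((m - 1 - k : ℕ) : ℤ) := by omega
      have e4 : (1 + ((m - k : ℕ) : ℚ)) = 2 + ((m - 1 - k : ℕ) : ℚ) := by
        have : (m - k : ℕ) = (m - 1 - k : ℕ) + 1 := by omega
        rw [this]; push_cast; ring
      rw [e3, zpow_natCast, e4, ← cnat]
      ring
    have hfin : (x + 2 + ((m-1:ℕ):ℚ)) = x + 1 + m := by
      have : ((m-1:ℕ):ℚ) = (m:ℚ) - 1 := by
        have : (1:ℕ) ≤ m := hm
        push_cast [this]; ring
      rw [this]; ring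
    rw [hfin] at hS2
    rw [hS2] at hA
    have hpow : (x + 1 + (m:ℚ)) ^ m = (x + 1 + m) ^ (m-1) * (x + 1 + m) := by
      rw [← pow_succ, show m - 1 + 1 = m by omega]
    have hzp : (x + 1 + (m:ℚ)) ^ ((m:ℤ) - 1) = (x + 1 + m) ^ (m-1) := by
      rw [show (m:ℤ) - 1 = ((m - 1 : ℕ) : ℤ) by omega, zpow_natCast]
    rw [hzp]
    have : ∑ k ∈ range (m+1), (m.choose k : ℚ) * (x + k) ^ ((k:ℤ) - 1)
        * (1 + ((m - k : ℕ) : ℚ)) ^ ((m:ℤ) - k - 1)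
        = x⁻¹ * (x + 1 + m) ^ m - (m:ℚ) * (x⁻¹ * (x + 1 + m) ^ (m-1)) := by
      linarith
    rw [this, hpow]
    ring

theorem tree_record_recurrence_closed_form (n k : ℕ) (hk : 2 ≤ k) (hkn : k ≤ n) :
    (k : ℚ) * ((n - 1).descFactorial (k - 1)) * (n : ℚ) ^ ((n : ℤ) - k - 1)
      = ∑ i ∈ Finset.Icc (k - 1) (n - 1),
          ((n - 1).choose i : ℚ)
            * (((k : ℚ) - 1) * ((i - 1).descFactorial (k - 2)) * (i : ℚ) ^ ((i : ℤ) - k))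
            * ((n : ℚ) - i) ^ ((n : ℤ) - i - 2) * i := by
  set m : ℕ := n - k with hm
  have hx : (0:ℚ) < (k:ℚ) - 1 := by
    have : (2:ℚ) ≤ (k:ℚ) := by exact_mod_cast hk
    linarith
  set D : ℚ := ((n - 1).descFactorial (k - 1) : ℚ) with hD
  have hIcc : Finset.Icc (k - 1) (n - 1) = Finset.Ico (k - 1) n := by
    rw [← Finset.Ico_add_one_right_eq_Icc, show n - 1 + 1 = n by omega]
  rw [hIcc, Finset.sum_Ico_eq_sum_range, show n - (k - 1) = m + 1 by omega]
  have term : ∀ j ∈ range (m + 1),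
      ((n - 1).choose (k - 1 + j) : ℚ)
          * (((k : ℚ) - 1) * (((k - 1 + j) - 1).descFactorial (k - 2)) * ((k - 1 + j : ℕ) : ℚ) ^ (((k - 1 + j : ℕ) : ℤ) - k))
          * ((n : ℚ) - ((k - 1 + j : ℕ) : ℚ)) ^ ((n : ℤ) - ((k - 1 + j : ℕ)) - 2) * ((k - 1 + j : ℕ) : ℚ)
        = (((k : ℚ) - 1) * D) * ((m.choose j : ℚ) * (((k : ℚ) - 1) + j) ^ ((j:ℤ) - 1)
            * (1 + ((m - j : ℕ) : ℚ)) ^ ((m:ℤ) - j - 1)) := by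
    intro j hj
    have hjm : j ≤ m := by simpa [Nat.lt_succ_iff] using hj
    set i : ℕ := k - 1 + j with hi
    have hi1 : 1 ≤ i := by omega
    have hin : i ≤ n - 1 := by omega
    have cm : (n - 1).choose i * i.choose (k-1) = (n-1).choose (k-1) * m.choose j := by
      have := Nat.choose_mul (n := n-1) (k := i) (s := k-1) (by omega)
      rw [show n - 1 - (k-1) = m by omega, show i - (k-1) = j by omega] at this
      exact this
    have enat : (n-1).choose i * (i * (i-1).descFactorial (k-2))
        = (n-1).descFactorial (k-1) * m.choose j := by
      have f1 : i.descFactorial (k-1) = i * (i-1).descFactorial (k-2) := by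
        have := Nat.succ_descFactorial_succ (i-1) (k-2)
        rw [show i - 1 + 1 = i by omega, show k - 2 + 1 = k - 1 by omega] at this
        exact this
      calc (n-1).choose i * (i * (i-1).descFactorial (k-2))
          = (n-1).choose i * i.descFactorial (k-1) := by rw [f1]
        _ = (n-1).choose i * ((k-1).factorial * i.choose (k-1)) := by
            rw [Nat.descFactorial_eq_factorial_mul_choose]
        _ = (k-1).factorial * ((n-1).choose i * i.choose (k-1)) := by ring
        _ = (k-1).factorial * ((n-1).choose (k-1) * m.choose j) := by rw [cm]
        _ = ((k-1).factorial * (n-1).choose (k-1)) * m.choose j := by ring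
        _ = (n-1).descFactorial (k-1) * m.choose j := by
            rw [Nat.descFactorial_eq_factorial_mul_choose]
    have enatQ : ((n-1).choose i : ℚ) * ((i:ℚ) * ((i-1).descFactorial (k-2) : ℚ))
        = D * (m.choose j : ℚ) := by
      rw [hD]
      exact_mod_cast congrArg (fun z : ℕ => (z : ℚ)) enat
    have ci : ((i:ℕ):ℚ) = ((k:ℚ) - 1) + j := by
      rw [hi]
      push_cast [show 1 ≤ k by omega]
      ring
    have ce : ((i:ℕ):ℤ) - k = (j:ℤ) - 1 := by
      rw [hi]; omega
    have cb : (n:ℚ) - ((i:ℕ):ℚ) = 1 + ((m - j : ℕ) : ℚ) := by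
      have h1 : (m - j : ℕ) = n - k - j := by omega
      have h2 : ((m - j:ℕ):ℚ) = (n:ℚ) - k - j := by
        rw [h1, show n - k - j = n - (k + j) by omega]
        push_cast [show k + j ≤ n by omega]
        ring
      rw [h2, hi]
      push_cast [show 1 ≤ k by omega]
      ring
    have cf : (n:ℤ) - ((i:ℕ):ℤ) - 2 = (m:ℤ) - j - 1 := by
      rw [hi]; omega
    rw [ci] at enatQ
    rw [cb, cf, ce, ci]
    linear_combination (((k:ℚ) - 1) * (((k:ℚ) - 1) + (j:ℚ)) ^ ((j:ℤ) - 1)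
      * (1 + ((m - j : ℕ) : ℚ)) ^ ((m:ℤ) - j - 1)) * enatQ
  rw [Finset.sum_congr rfl term, ← Finset.mul_sum, hurwitz m ((k:ℚ) - 1) hx]
  have hxn : (k:ℚ) - 1 + 1 + (m:ℚ) = (n:ℚ) := by
    push_cast [hm, show k ≤ n from hkn]
    ring
  have hen : (m:ℤ) - 1 = (n:ℤ) - k - 1 := by omega
  rw [hxn, hen]
  rw [show (k:ℚ) - 1 + 1 = (k:ℚ) by ring]
  have hne : (k:ℚ) - 1 ≠ 0 := hx.ne'
  field_simp
end

section
/- For n ≥ k ≥ 1, n! · [z^n] (T(z)^k/k − T(z)^{k+1}/(k+1)) = k·(n−1)(n−2)···(n−k+1)·n^{n−k−1}, where T(z) = Σ_{m≥1} m^{m−1} z^m/m! is the Cayley tree function. -/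
/-- The Cayley tree function `T(z) = ∑_{m ≥ 1} m^{m-1} z^m / m!`. -/
noncomputable def cayleyTree : PowerSeries ℚ :=
  PowerSeries.mk fun m => if m = 0 then (0 : ℚ) else (m : ℚ) ^ (m - 1) / m.factorial


open Polynomial Finset

noncomputable def abelP : ℕ → Polynomial ℚ
  | 0 => 1
  | (k+1) => X * (X + C ((k : ℚ)+1)) ^ k

lemma abelP_succ (j : ℕ) : abelP (j+1) = X * (X + C ((j : ℚ)+1)) ^ j := rfl

lemma abelP_deriv (k : ℕ) :
    (abelP (k+1)).derivative = ((k : ℚ)+1) • (abelP k).comp (X + 1) := by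
  cases k with
  | zero => simp [abelP]
  | succ j =>
    rw [abelP_succ, abelP_succ]
    have e1 : ((↑(j+1) : ℚ)+1) = (j:ℚ)+2 := by push_cast; ring
    have e2 : (X + C ((↑(j+1) : ℚ)+1) : Polynomial ℚ) = X + C ((j:ℚ)+2) := by rw [e1]
    rw [e2, derivative_mul, derivative_pow]
    simp only [derivative_X, derivative_add, derivative_C, add_zero, one_mul, mul_one,
      Nat.add_sub_cancel]
    rw [mul_comp, X_comp, pow_comp, add_comp, X_comp, C_comp]
    have h2 : (X + 1 + C ((j : ℚ)+1) : Polynomial ℚ) = X + C ((j : ℚ)+2) := by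
      simp only [C_add, map_one, map_ofNat]; ring
    rw [h2, pow_succ]
    push_cast
    simp only [smul_eq_C_mul, C_add, map_one, map_ofNat]; ring


lemma abelP_zero : abelP 0 = 1 := rfl

lemma abel_main : ∀ (n : ℕ) (y : ℚ),
    ∑ k ∈ Finset.range (n+1),
      (n.choose k : ℚ) • (abelP k * C ((y + ((n - k : ℕ) : ℚ)) ^ (n - k)))
    = (X + C (y + n)) ^ n := by
  intro n
  induction n with
  | zero => intro y; simp [abelP]
  | succ n ih =>
    intro y
    set L : Polynomial ℚ := ∑ k ∈ Finset.range (n+1+1),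
      ((n+1).choose k : ℚ) • (abelP k * C ((y + ((n+1 - k : ℕ) : ℚ)) ^ (n+1 - k))) with hL
    set R : Polynomial ℚ := (X + C (y + (n+1 : ℕ))) ^ (n+1) with hR
    have hcomp : ∑ j ∈ Finset.range (n+1), (n.choose j : ℚ) •
        ((abelP j).comp (X+1) * C ((y + ((n - j : ℕ) : ℚ)) ^ (n - j)))
        = (X + C (y + ((n+1:ℕ) : ℚ))) ^ n := by
      have h := congrArg (fun p => p.comp (X+1)) (ih y)
      simp only [Polynomial.sum_comp, smul_comp, mul_comp, C_comp, pow_comp, add_comp, X_comp] at h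
      rw [h]
      congr 1
      push_cast
      simp only [Polynomial.C_add, Polynomial.C_1]
      ring
    have hderiv : (L - R).derivative = 0 := by
      rw [derivative_sub]
      have hdL : L.derivative = ((n:ℚ)+1) • (X + C (y + ((n+1:ℕ):ℚ))) ^ n := by
        rw [hL, derivative_sum]
        rw [Finset.sum_range_succ']
        simp only [derivative_smul, derivative_mul, derivative_C, mul_zero, add_zero]
        rw [abelP_zero, derivative_one, zero_mul, smul_zero, add_zero]
        have hterm : ∀ j ∈ Finset.range (n+1),
            (((n+1).choose (j+1) : ℚ)) • ((abelP (j+1)).derivative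
              * C ((y + ((n+1-(j+1) : ℕ) : ℚ)) ^ (n+1-(j+1))))
            = ((n:ℚ)+1) • ((n.choose j : ℚ) •
              ((abelP j).comp (X+1) * C ((y + ((n - j : ℕ) : ℚ)) ^ (n - j)))) := by
          intro j hj
          rw [abelP_deriv, Nat.succ_sub_succ]
          rw [smul_mul_assoc, smul_smul, smul_smul]
          have h0 : (n+1).choose (j+1) * (j+1) = (n+1) * n.choose j :=
            (Nat.add_one_mul_choose_eq n j).symm
          have hq : (((n+1).choose (j+1) : ℚ)) * ((j:ℚ)+1) = ((n:ℚ)+1) * (n.choose j : ℚ) := by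
            exact_mod_cast h0
          rw [hq]
        rw [Finset.sum_congr rfl hterm, ← Finset.smul_sum, hcomp]
      have hdR : R.derivative = ((n:ℚ)+1) • (X + C (y + ((n+1:ℕ):ℚ))) ^ n := by
        rw [hR, derivative_pow]
        simp only [derivative_add, derivative_X, derivative_C, add_zero, mul_one,
          Nat.add_sub_cancel]
        rw [smul_eq_C_mul]
        push_cast
        ring
      rw [hdL, hdR, sub_self]
    have hconst : L - R = C ((L - R).coeff 0) := eq_C_of_derivative_eq_zero hderiv
    have heval : (L - R).eval 0 = 0 := by
      rw [eval_sub]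
      have hevL : L.eval 0 = (y + ((n+1:ℕ):ℚ)) ^ (n+1) := by
        rw [hL, eval_finset_sum, Finset.sum_range_succ']
        have hterm : ∀ j ∈ Finset.range (n+1),
            (((n+1).choose (j+1) : ℚ) • (abelP (j+1) *
              C ((y + ((n+1-(j+1) : ℕ) : ℚ)) ^ (n+1-(j+1))))).eval 0 = 0 := by
          intro j hj
          rw [eval_smul, eval_mul, abelP_succ, eval_mul, eval_X, zero_mul, zero_mul,
            smul_zero]
        rw [Finset.sum_congr rfl hterm, Finset.sum_const, smul_zero, zero_add]
        simp [abelP_zero]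
      have hevR : R.eval 0 = (y + ((n+1:ℕ):ℚ)) ^ (n+1) := by
        rw [hR]
        simp
      rw [hevL, hevR, sub_self]
    have hzero : L - R = 0 := by
      have hc : (L - R).coeff 0 = 0 := by
        rw [hconst] at heval; simpa using heval
      rw [hconst, hc, map_zero]
    exact sub_eq_zero.mp hzero

lemma abelP_eval_one (j : ℕ) : (abelP j).eval 1 = ((j:ℚ)+1)^(j-1) := by
  cases j with
  | zero => simp [abelP]
  | succ i =>
    rw [abelP_succ]
    simp only [eval_mul, eval_X, eval_pow, eval_add, eval_C, one_mul, Nat.add_sub_cancel]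
    push_cast; ring_nf

lemma abelP_deriv_eval_zero (j : ℕ) :
    ((abelP (j+1)).derivative).eval 0 = ((j:ℚ)+1)^j := by
  rw [abelP_deriv, eval_smul, eval_comp, eval_add, eval_X, eval_one, zero_add, abelP_eval_one,
    smul_eq_mul]
  cases j with
  | zero => norm_num
  | succ i =>
    rw [Nat.add_sub_cancel, ← pow_succ']

lemma abel_num (n : ℕ) :
    ∑ j ∈ Finset.range n, (n.choose (j+1) : ℚ) * (((j:ℚ)+1)^j * (((n-(j+1) : ℕ)) : ℚ)^(n-(j+1)))
      = (n:ℚ) * (n:ℚ)^(n-1) := by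
  have h := congrArg (fun p : Polynomial ℚ => (Polynomial.derivative p).eval 0) (abel_main n 0)
  simp only [derivative_sum, derivative_smul, derivative_mul, derivative_C, mul_zero, add_zero,
    eval_finset_sum, eval_smul, eval_mul, eval_C, smul_eq_mul, zero_add,
    derivative_pow, derivative_add, derivative_X, derivative_C, eval_add, eval_X, eval_pow,
    eval_one, mul_one] at h
  rw [Finset.sum_range_succ'] at h
  simpa [abelP_zero, abelP_deriv_eval_zero] using h


open PowerSeries

lemma cayley_coeff_zero : PowerSeries.coeff 0 cayleyTree = 0 := by simp [cayleyTree]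

lemma cayley_coeff_succ (m : ℕ) :
    PowerSeries.coeff (m+1) cayleyTree = ((m:ℚ)+1)^m / (m+1).factorial := by
  simp [cayleyTree]

lemma cayley_ode : PowerSeries.X * derivative ℚ cayleyTree
    = cayleyTree + PowerSeries.X * (cayleyTree * derivative ℚ cayleyTree) := by
  ext n
  cases n with
  | zero =>
    simp [coeff_zero_X_mul, cayley_coeff_zero, cayleyTree]
  | succ n =>
    rw [map_add, coeff_succ_X_mul, coeff_succ_X_mul, PowerSeries.coeff_derivative, PowerSeries.coeff_mul]
    rw [Finset.Nat.sum_antidiagonal_eq_sum_range_succ_mk, Finset.sum_range_succ']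
    rw [cayley_coeff_zero, zero_mul, add_zero]
    have hterm : ∀ i ∈ Finset.range n,
        PowerSeries.coeff (i+1) cayleyTree * PowerSeries.coeff (n - (i+1)) (derivative ℚ cayleyTree)
        = ((n+1).choose (i+1) : ℚ) * (((i:ℚ)+1)^i
            * (((n+1-(i+2) : ℕ)+1 : ℕ) : ℚ)^((n+1-(i+2))+1)) / (n+1).factorial := by
      intro i hi
      have hi' : i < n := Finset.mem_range.mp hi
      rw [PowerSeries.coeff_derivative, cayley_coeff_succ, cayley_coeff_succ]
      have e4 : ((n - (i+1) : ℕ) : ℚ) + 1 = ((n - i : ℕ) : ℚ) := by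
        push_cast [Nat.cast_sub hi'.le, Nat.cast_sub (by omega : i + 1 ≤ n)]; ring
      have e1 : n - (i+1) + 1 = n - i := by omega
      have e2 : n + 1 - (i+2) + 1 = n - i := by omega
      rw [e4, e1, e2]
      have hch : (((n+1).choose (i+1) : ℚ)) =
          ((n+1).factorial : ℚ) / ((i+1).factorial * (n-i).factorial) := by
        have e5 : n + 1 - (i+1) = n - i := by omega
        rw [Nat.cast_choose ℚ (by omega : i + 1 ≤ n + 1), e5]
      rw [hch]
      have hpow : ((n - i : ℕ) : ℚ)^(n-(i+1)) * ((n - i : ℕ) : ℚ) = ((n - i : ℕ) : ℚ)^(n-i) := by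
        have e6 : n-(i+1)+1 = n-i := by omega
        rw [← pow_succ, e6]
      field_simp
      exact hpow
    rw [Finset.sum_congr rfl hterm]
    have habel := abel_num (n+1)
    rw [Finset.sum_range_succ] at habel
    rw [Nat.add_sub_cancel] at habel
    simp only [Nat.sub_self, Nat.cast_zero, pow_zero, mul_one, Nat.choose_self, Nat.cast_one,
      one_mul] at habel
    have hsplit : ∑ i ∈ Finset.range n, (((n+1).choose (i+1) : ℚ) * (((i:ℚ)+1)^i
            * (((n+1-(i+2) : ℕ)+1 : ℕ) : ℚ)^((n+1-(i+2))+1)) / (n+1).factorial)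
        = (∑ i ∈ Finset.range n, ((n+1).choose (i+1) : ℚ) * (((i:ℚ)+1)^i
            * (((n+1-(i+2) : ℕ)+1 : ℕ) : ℚ)^((n+1-(i+2))+1))) / (n+1).factorial := by
      rw [Finset.sum_div]
    rw [hsplit]
    have hsum : ∑ i ∈ Finset.range n, ((n+1).choose (i+1) : ℚ) * (((i:ℚ)+1)^i
            * (((n+1-(i+2) : ℕ)+1 : ℕ) : ℚ)^((n+1-(i+2))+1))
        = ∑ j ∈ Finset.range n, ((n+1).choose (j+1) : ℚ) * (((j:ℚ)+1)^j
            * (((n+1-(j+1) : ℕ)) : ℚ)^(n+1-(j+1))) := by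
      apply Finset.sum_congr rfl
      intro i hi
      have hi' : i < n := Finset.mem_range.mp hi
      have e : n + 1 - (i+2) + 1 = n + 1 - (i+1) := by omega
      rw [e]
    rw [hsum, cayley_coeff_succ]
    have hS : ∑ j ∈ Finset.range n, ((n+1).choose (j+1) : ℚ) * (((j:ℚ)+1)^j
            * (((n+1-(j+1) : ℕ)) : ℚ)^(n+1-(j+1)))
        = ((n:ℚ)+1) * ((n:ℚ)+1)^n - ((n:ℚ)+1)^n := by
      push_cast at habel ⊢
      linarith
    rw [hS]
    have hfac : (((n+1).factorial : ℚ)) ≠ 0 := by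
      exact_mod_cast Nat.factorial_ne_zero (n+1)
    field_simp
    ring

lemma coeff_X_mul_deriv (f : PowerSeries ℚ) (n : ℕ) :
    PowerSeries.coeff n (PowerSeries.X * derivative ℚ f) = (n : ℚ) * PowerSeries.coeff n f := by
  cases n with
  | zero => simp [coeff_zero_X_mul]
  | succ m =>
    rw [coeff_succ_X_mul, PowerSeries.coeff_derivative]
    push_cast; ring

lemma cayley_pow_ode (j : ℕ) :
    (PowerSeries.C ((j:ℚ)+2)) * (PowerSeries.X * derivative ℚ (cayleyTree^(j+1)))
    = (PowerSeries.C (((j:ℚ)+1)*((j:ℚ)+2))) * cayleyTree^(j+1)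
      + (PowerSeries.C ((j:ℚ)+1)) * (PowerSeries.X * derivative ℚ (cayleyTree^(j+2))) := by
  have h1 : derivative ℚ (cayleyTree^(j+1))
      = (PowerSeries.C ((j:ℚ)+1)) * (cayleyTree^j * derivative ℚ cayleyTree) := by
    rw [Derivation.leibniz_pow, Nat.add_sub_cancel]
    rw [smul_eq_mul, nsmul_eq_mul, map_add, map_one, map_natCast]
    push_cast; ring
  have h2 : derivative ℚ (cayleyTree^(j+2))
      = (PowerSeries.C ((j:ℚ)+2)) * (cayleyTree^(j+1) * derivative ℚ cayleyTree) := by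
    rw [Derivation.leibniz_pow, show j+2-1 = j+1 from rfl]
    rw [smul_eq_mul, nsmul_eq_mul, map_add, map_natCast, map_ofNat]
    push_cast; ring
  have hmul := congrArg (fun f => cayleyTree^j * f) cayley_ode
  simp only [mul_add] at hmul
  rw [h1, h2, map_mul]
  linear_combination (PowerSeries.C ((j:ℚ)+1)) * (PowerSeries.C ((j:ℚ)+2)) * hmul

lemma coeff_rec (n j : ℕ) :
    (((j:ℚ)+2)) * ((n:ℚ) * PowerSeries.coeff n (cayleyTree^(j+1)))
    = (((j:ℚ)+1)*((j:ℚ)+2)) * PowerSeries.coeff n (cayleyTree^(j+1))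
      + (((j:ℚ)+1)) * ((n:ℚ) * PowerSeries.coeff n (cayleyTree^(j+2))) := by
  have h := congrArg (PowerSeries.coeff n) (cayley_pow_ode j)
  rw [PowerSeries.coeff_C_mul] at h
  rw [map_add] at h
  rw [PowerSeries.coeff_C_mul, PowerSeries.coeff_C_mul] at h
  rwa [coeff_X_mul_deriv, coeff_X_mul_deriv] at h

lemma desc_cast (n k : ℕ) :
    (n.descFactorial (k+1) : ℚ) = ((n:ℚ) - k) * n.descFactorial k := by
  rcases le_or_gt k n with h | h
  · rw [Nat.descFactorial_succ, Nat.cast_mul, Nat.cast_sub h]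
  · rw [Nat.descFactorial_succ,
      Nat.descFactorial_eq_zero_iff_lt.mpr h]
    simp

lemma coeff_cayley_pow (n : ℕ) (hn : 1 ≤ n) : ∀ j : ℕ,
    PowerSeries.coeff n (cayleyTree^(j+1))
      = ((j:ℚ)+1) * ((n:ℚ)^((n:ℤ) - (j+1) - 1)) * ((n.descFactorial (j+1) : ℚ))
          / n.factorial := by
  have hn0 : ((n:ℚ)) ≠ 0 := Nat.cast_ne_zero.mpr (by omega)
  have hfac : ((n.factorial : ℚ)) ≠ 0 := by exact_mod_cast Nat.factorial_ne_zero n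
  intro j
  induction j with
  | zero =>
    obtain ⟨m, rfl⟩ : ∃ m, n = m + 1 := ⟨n - 1, by omega⟩
    rw [pow_one, cayley_coeff_succ, Nat.descFactorial_one]
    rw [show ((m+1:ℕ):ℤ) - (((0:ℕ):ℤ)+1) - 1 = (m:ℤ) - 1 from by push_cast; ring]
    rw [zpow_sub₀ hn0, zpow_natCast, zpow_one]
    field_simp
    push_cast; ring
  | succ j ih =>
    have hrec := coeff_rec n j
    rw [ih] at hrec
    have hj1 : ((j:ℚ)+1) ≠ 0 := by positivity
    have hzp : ((n:ℚ))^((n:ℤ) - ((j:ℤ)+1) - 1)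
        = ((n:ℚ))^((n:ℤ) - ((j+1+1:ℕ):ℤ) - 1) * (n:ℚ) := by
      rw [show (n:ℤ) - ((j:ℤ)+1) - 1 = ((n:ℤ) - ((j+1+1:ℕ):ℤ) - 1) + 1 from by push_cast; ring]
      rw [zpow_add₀ hn0, zpow_one]
    rw [hzp] at hrec
    have hne : ((j:ℚ)+1) * (n:ℚ) ≠ 0 := mul_ne_zero hj1 hn0
    have key : ((j:ℚ)+1) * (n:ℚ) * PowerSeries.coeff n (cayleyTree^(j+2))
        = ((j:ℚ)+1) * (n:ℚ) * (((j:ℚ)+1+1) * ((n:ℚ)^((n:ℤ) - ((j+1+1:ℕ):ℤ) - 1))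
            * (((n:ℚ) - ((j:ℚ)+1)) * (n.descFactorial (j+1) : ℚ)) / n.factorial) := by
      have expand : ((j:ℚ)+1) * (n:ℚ) * (((j:ℚ)+1+1) * ((n:ℚ)^((n:ℤ) - ((j+1+1:ℕ):ℤ) - 1))
            * (((n:ℚ) - ((j:ℚ)+1)) * (n.descFactorial (j+1) : ℚ)) / n.factorial)
          = (((j:ℚ)+2)) * ((n:ℚ) * (((j:ℚ)+1) * ((n:ℚ)^((n:ℤ) - ((j+1+1:ℕ):ℤ) - 1) * (n:ℚ))
              * (n.descFactorial (j+1) : ℚ) / n.factorial))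
            - (((j:ℚ)+1)*((j:ℚ)+2)) * (((j:ℚ)+1) * ((n:ℚ)^((n:ℤ) - ((j+1+1:ℕ):ℤ) - 1) * (n:ℚ))
              * (n.descFactorial (j+1) : ℚ) / n.factorial) := by
        ring
      rw [expand]
      linear_combination -hrec
    have hc2 := mul_left_cancel₀ hne key
    rw [show j+1+1 = j+2 from rfl, hc2]
    have hdesc : ((n.descFactorial (j+2) : ℚ))
        = ((n:ℚ) - ((j:ℚ)+1)) * (n.descFactorial (j+1) : ℚ) := by
      rw [desc_cast n (j+1)]
      push_cast
      ring
    rw [hdesc]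
    rw [show (n:ℤ) - (((j+1:ℕ):ℤ)+1) - 1 = (n:ℤ) - ((j+1+1:ℕ):ℤ) - 1 from by push_cast; ring]
    push_cast
    ring


theorem tree_record_coefficient (n k : ℕ) (hk : 1 ≤ k) (hkn : k ≤ n) :
    (n.factorial : ℚ) *
        PowerSeries.coeff n
          (PowerSeries.C (1 / (k : ℚ)) * cayleyTree ^ k
            - PowerSeries.C (1 / ((k : ℚ) + 1)) * cayleyTree ^ (k + 1))
      = (k : ℚ) * ((n - 1).descFactorial (k - 1)) * (n : ℚ) ^ ((n : ℤ) - k - 1) := by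
  obtain ⟨j, rfl⟩ : ∃ j, k = j + 1 := ⟨k - 1, by omega⟩
  have hn : 1 ≤ n := le_trans hk hkn
  have hn0 : ((n:ℚ)) ≠ 0 := Nat.cast_ne_zero.mpr (by omega)
  have hfac : ((n.factorial : ℚ)) ≠ 0 := by exact_mod_cast Nat.factorial_ne_zero n
  have hj1 : ((j:ℚ)+1) ≠ 0 := by positivity
  rw [map_sub, PowerSeries.coeff_C_mul, PowerSeries.coeff_C_mul,
    coeff_cayley_pow n hn j, coeff_cayley_pow n hn (j+1)]
  rw [show (j+1) - 1 = j from rfl]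
  have h1 : (n.descFactorial (j+1) : ℚ) = (n:ℚ) * (((n-1).descFactorial j : ℚ)) := by
    obtain ⟨m, rfl⟩ : ∃ m, n = m + 1 := ⟨n - 1, by omega⟩
    rw [Nat.succ_descFactorial_succ, show m+1-1 = m from rfl]
    push_cast; ring
  have h2 : (n.descFactorial (j+1+1) : ℚ)
      = ((n:ℚ) - ((j:ℚ)+1)) * (n.descFactorial (j+1) : ℚ) := by
    rw [desc_cast n (j+1)]; push_cast; ring
  have hzp : ((n:ℚ))^((n:ℤ) - ((j:ℤ)+1) - 1)
      = ((n:ℚ))^((n:ℤ) - ((j+1+1:ℕ):ℤ) - 1) * (n:ℚ) := by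
    rw [show (n:ℤ) - ((j:ℤ)+1) - 1 = ((n:ℤ) - ((j+1+1:ℕ):ℤ) - 1) + 1 from by push_cast; ring]
    rw [zpow_add₀ hn0, zpow_one]
  rw [show ((n:ℤ) - ((j+1:ℕ):ℤ) - 1) = (n:ℤ) - ((j:ℤ)+1) - 1 from by push_cast; ring]
  rw [show ((n:ℤ) - (((j+1:ℕ):ℤ)+1) - 1) = (n:ℤ) - ((j+1+1:ℕ):ℤ) - 1 from by push_cast; ring]
  rw [h2, h1, hzp]
  field_simp
  push_cast; ring
end

section
/- For every n ≥ 1, Σ over all compositions (t_1,...,t_k) of n (all lengths k, all positive parts) of (1/n)·multinomial(n; t_1,...,t_k)·t_1^{t_1−1} t_2^{t_2−1} ··· t_k^{t_k−1} equals n^{n−1}. -/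
open Finset

/-! ### Algebraic part: a variant of Abel's binomial identity -/

private def S (m i : ℕ) (x : ℚ) : ℚ := ∑ k ∈ range (m+1), (-1:ℚ)^k * (m.choose k) * (x + k)^i

private lemma Sstep (m i : ℕ) (x : ℚ) : S (m+1) i x = S m i x - S m i (x+1) := by
  have e1 : S (m+1) i x
      = ∑ k ∈ range (m+1), ((-1:ℚ)^(k+1) * (m.choose k) * (x+(k+1:ℕ))^i
          + (-1:ℚ)^(k+1) * (m.choose (k+1)) * (x+(k+1:ℕ))^i) + x^i := by
    rw [S, Finset.sum_range_succ' _ (m+1)]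
    congr 1
    · apply Finset.sum_congr rfl
      intro k hk
      rw [Nat.choose_succ_succ]
      push_cast
      ring
    · simp
  have e2 : ∑ k ∈ range (m+1), (-1:ℚ)^(k+1) * (m.choose (k+1)) * (x+(k+1:ℕ))^i + x^i
      = S m i x := by
    rw [Finset.sum_range_succ, Nat.choose_succ_self]
    rw [S, Finset.sum_range_succ' _ m]
    simp
  have e3 : ∑ k ∈ range (m+1), (-1:ℚ)^(k+1) * (m.choose k) * (x+(k+1:ℕ))^i
      = - S m i (x+1) := by
    rw [S, ← Finset.sum_neg_distrib]
    apply Finset.sum_congr rfl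
    intro k hk
    push_cast
    ring
  rw [e1, Finset.sum_add_distrib, add_assoc, e2, e3]
  ring

private lemma alt_sum_pow : ∀ m : ℕ, ∀ i < m, ∀ x : ℚ, S m i x = 0 := by
  intro m
  induction m with
  | zero => intro i hi; omega
  | succ m ih =>
    intro i hi x
    rw [Sstep]
    rcases Nat.eq_or_lt_of_le (Nat.lt_succ_iff.mp hi) with h | h
    · subst h
      have expand : ∀ k : ℕ, (x+k)^i - ((x+1)+k)^i = -∑ j ∈ range i, (x+k)^j * (i.choose j) := by
        intro k
        have h1 : ∀ y : ℚ, (y+1)^i = ∑ j ∈ range (i+1), y^j * (i.choose j) := by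
          intro y; rw [add_pow]; simp
        rw [show x+1+(k:ℚ) = (x+(k:ℚ))+1 by ring, h1, Finset.sum_range_succ]
        simp
      have main : S i i x - S i i (x+1)
          = ∑ k ∈ range (i+1), ∑ j ∈ range i,
              (-(i.choose j : ℚ)) * ((-1:ℚ)^k * (i.choose k) * (x+k)^j) := by
        rw [S, S, ← Finset.sum_sub_distrib]
        apply Finset.sum_congr rfl
        intro k _
        calc (-1:ℚ)^k * (i.choose k) * (x+k)^i - (-1:ℚ)^k * (i.choose k) * ((x+1)+k)^i
            = (-1:ℚ)^k * (i.choose k) * ((x+k)^i - ((x+1)+k)^i) := by ring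
          _ = (-1:ℚ)^k * (i.choose k) * (-∑ j ∈ range i, (x+k)^j * (i.choose j)) := by
              rw [expand k]
          _ = _ := by
              rw [mul_neg, Finset.mul_sum, ← Finset.sum_neg_distrib]
              exact Finset.sum_congr rfl (fun j _ => by ring)
      rw [main, Finset.sum_comm]
      apply Finset.sum_eq_zero
      intro j hj
      rw [← Finset.mul_sum, ← S, ih j (mem_range.mp hj), mul_zero]
    · rw [ih i h x, ih i h (x+1), sub_self]

private lemma sub_pow_expand (a b : ℚ) (m : ℕ) :
    (a - b)^m = ∑ j ∈ range (m+1), (-1:ℚ)^j * b^j * a^(m-j) * (m.choose j) := by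
  rw [sub_eq_add_neg, add_comm, add_pow]
  apply Finset.sum_congr rfl
  intro j _
  rw [neg_pow]
  try ring

private lemma stepA (n : ℕ) (x : ℚ) :
    ∑ k ∈ Icc 1 n, (n.choose k : ℚ) * x * (x+k)^(k-1) * ((n-k : ℕ):ℚ)^(n-k)
    = ∑ k ∈ Icc 1 n, ∑ j ∈ range (n-k+1),
        (n.choose k : ℚ) * ((n-k).choose j) * (-1:ℚ)^j * x * (x+k)^((k-1)+j) * (x+n)^(n-k-j) := by
  apply Finset.sum_congr rfl
  intro k hk
  obtain ⟨hk1, hkn⟩ := mem_Icc.mp hk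
  have hc : ((n-k : ℕ):ℚ) = (x+n) - (x+k) := by
    rw [Nat.cast_sub hkn]; ring
  rw [hc, sub_pow_expand, Finset.mul_sum]
  apply Finset.sum_congr rfl
  intro j hj
  rw [pow_add]
  ring

private lemma stepB (n : ℕ) (x : ℚ) :
    ∑ k ∈ Icc 1 n, ∑ j ∈ range (n-k+1),
        (n.choose k : ℚ) * ((n-k).choose j) * (-1:ℚ)^j * x * (x+k)^((k-1)+j) * (x+n)^(n-k-j)
    = ∑ m ∈ Icc 1 n, ∑ k ∈ Icc 1 m,
        (n.choose k : ℚ) * ((n-k).choose (m-k)) * (-1:ℚ)^(m-k) * x * (x+k)^(m-1) * (x+n)^(n-m) := by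
  rw [Finset.sum_sigma', Finset.sum_sigma']
  refine Finset.sum_nbij' (fun p => ⟨p.1 + p.2, p.1⟩) (fun p => ⟨p.2, p.1 - p.2⟩) ?_ ?_ ?_ ?_ ?_
  · simp only [Finset.mem_sigma, mem_Icc, mem_range, Sigma.forall]
    intro a b h
    omega
  · simp only [Finset.mem_sigma, mem_Icc, mem_range, Sigma.forall]
    intro a b h
    omega
  · simp only [Finset.mem_sigma, mem_Icc, mem_range, Sigma.forall]
    intro a b h
    simp only [Sigma.mk.inj_iff, heq_eq_eq, true_and, and_true]
    omega
  · simp only [Finset.mem_sigma, mem_Icc, mem_range, Sigma.forall]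
    intro a b h
    simp only [Sigma.mk.inj_iff, heq_eq_eq, true_and, and_true]
    omega
  · simp only [Finset.mem_sigma, mem_Icc, mem_range, Sigma.forall]
    intro a b h
    have h1 : a + b - a = b := by omega
    have h2 : a + b - 1 = (a - 1) + b := by omega
    have h3 : n - (a + b) = n - a - b := by omega
    simp only [h1, h2, h3]

private lemma sum_Icc_one (m : ℕ) (f : ℕ → ℚ) :
    ∑ k ∈ Icc 1 m, f k = ∑ k ∈ range m, f (k+1) := by
  rw [← Finset.Ico_add_one_right_eq_Icc, Finset.sum_Ico_eq_sum_range]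
  try simp only [Nat.add_sub_cancel]
  exact Finset.sum_congr rfl (fun k _ => by rw [add_comm])

private lemma icc_S (m i : ℕ) (x : ℚ) :
    ∑ k ∈ Icc 1 m, (-1:ℚ)^k * (m.choose k) * (x+k)^i = S m i x - x^i := by
  rw [S, Finset.sum_range_succ' _ m, sum_Icc_one]
  simp

private lemma stepC (n m : ℕ) (hm1 : 1 ≤ m) (hm2 : m ≤ n) (x : ℚ)
    (halt : ∀ i < m, ∀ y : ℚ, S m i y = 0) :
    ∑ k ∈ Icc 1 m, (n.choose k : ℚ) * ((n-k).choose (m-k)) * (-1:ℚ)^(m-k) * x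
        * (x+k)^(m-1) * (x+n)^(n-m)
    = (n.choose m : ℚ) * (-1:ℚ)^(m+1) * x^m * (x+n)^(n-m) := by
  have e1 : ∀ k ∈ Icc 1 m,
      (n.choose k : ℚ) * ((n-k).choose (m-k)) * (-1:ℚ)^(m-k) * x * (x+k)^(m-1) * (x+n)^(n-m)
      = ((n.choose m : ℚ) * (-1:ℚ)^m * x * (x+n)^(n-m))
          * ((-1:ℚ)^k * (m.choose k) * (x+k)^(m-1)) := by
    intro k hk
    obtain ⟨hk1, hk2⟩ := mem_Icc.mp hk
    have c1 : (n.choose m : ℚ) * (m.choose k) = (n.choose k : ℚ) * ((n-k).choose (m-k)) := by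
      exact_mod_cast congrArg (Nat.cast : ℕ → ℚ) (Nat.choose_mul (n := n) hk2)
    have c3 : (-1:ℚ)^m * (-1:ℚ)^k = (-1:ℚ)^(m-k) := by
      rw [← pow_add, show m + k = (m-k) + 2*k by omega, pow_add, pow_mul]
      simp
    calc (n.choose k : ℚ) * ((n-k).choose (m-k)) * (-1:ℚ)^(m-k) * x * (x+k)^(m-1) * (x+n)^(n-m)
        = ((n.choose k : ℚ) * ((n-k).choose (m-k))) * ((-1:ℚ)^(m-k)) * x * (x+k)^(m-1) * (x+n)^(n-m) := by ring
      _ = ((n.choose m : ℚ) * (m.choose k)) * ((-1:ℚ)^m * (-1:ℚ)^k) * x * (x+k)^(m-1) * (x+n)^(n-m) := by rw [c1, c3]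
      _ = _ := by ring
  rw [Finset.sum_congr rfl e1, ← Finset.mul_sum, icc_S, halt (m-1) (by omega) x]
  have hx : x * x^(m-1) = x^m := by
    rw [← pow_succ']
    congr 1
    omega
  calc (n.choose m : ℚ) * (-1:ℚ)^m * x * (x+n)^(n-m) * (0 - x^(m-1))
      = (n.choose m : ℚ) * ((-1:ℚ)^m * (-1)) * (x * x^(m-1)) * (x+n)^(n-m) := by ring
    _ = _ := by rw [hx, ← pow_succ]

private lemma abel_aux (n : ℕ) (x : ℚ) :
    ∑ k ∈ Icc 1 n, (n.choose k : ℚ) * x * (x+k)^(k-1) * ((n-k : ℕ):ℚ)^(n-k)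
    = (x + n)^n - (n:ℚ)^n := by
  rw [stepA, stepB]
  have e1 : ∀ m ∈ Icc 1 n,
      ∑ k ∈ Icc 1 m, (n.choose k : ℚ) * ((n-k).choose (m-k)) * (-1:ℚ)^(m-k) * x
        * (x+k)^(m-1) * (x+n)^(n-m)
      = (n.choose m : ℚ) * (-1:ℚ)^(m+1) * x^m * (x+n)^(n-m) := by
    intro m hm
    obtain ⟨h1, h2⟩ := mem_Icc.mp hm
    exact stepC n m h1 h2 x (alt_sum_pow m)
  rw [Finset.sum_congr rfl e1]
  have e2 : (n:ℚ)^n = ∑ j ∈ range (n+1), (-1:ℚ)^j * x^j * (x+n)^(n-j) * (n.choose j) := by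
    rw [← sub_pow_expand (x+n) x n]
    congr 1
    ring
  rw [eq_sub_iff_add_eq, e2, Finset.sum_range_succ' _ n, sum_Icc_one]
  simp only [pow_zero, one_mul, Nat.sub_zero, Nat.choose_zero_right, Nat.cast_one, mul_one]
  rw [← add_assoc, ← Finset.sum_add_distrib]
  rw [Finset.sum_eq_zero (fun k _ => by ring), zero_add]

open Polynomial in
private lemma abel_zero (n : ℕ) (hn : 0 < n) :
    ∑ k ∈ Icc 1 n, (n.choose k : ℚ) * (k:ℚ)^(k-1) * ((n-k : ℕ):ℚ)^(n-k) = (n:ℚ)^n := by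
  have habel := abel_aux n
  set P : ℚ[X] := ∑ k ∈ Icc 1 n,
    Polynomial.C ((n.choose k : ℚ) * ((n-k : ℕ):ℚ)^(n-k)) * (X + Polynomial.C (k:ℚ))^(k-1) with hP
  set Q : ℚ[X] := ∑ m ∈ Icc 1 n,
    Polynomial.C ((n.choose m : ℚ) * (n:ℚ)^(n-m)) * X^(m-1) with hQ
  have hPeval : ∀ x : ℚ, P.eval x = ∑ k ∈ Icc 1 n,
      (n.choose k : ℚ) * ((n-k : ℕ):ℚ)^(n-k) * (x+k)^(k-1) := by
    intro x
    rw [hP, Polynomial.eval_finset_sum]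
    simp
  have hQeval : ∀ x : ℚ, Q.eval x = ∑ m ∈ Icc 1 n,
      (n.choose m : ℚ) * (n:ℚ)^(n-m) * x^(m-1) := by
    intro x
    rw [hQ, Polynomial.eval_finset_sum]
    simp
  have hbin : ∀ x : ℚ, ∑ m ∈ Icc 1 n, (n.choose m : ℚ) * (n:ℚ)^(n-m) * x^m
      = (x + n)^n - (n:ℚ)^n := by
    intro x
    have : (x + (n:ℚ))^n = ∑ m ∈ range (n+1), x^m * (n:ℚ)^(n-m) * (n.choose m) := add_pow x n n
    rw [eq_sub_iff_add_eq, this, Finset.sum_range_succ' _ n, sum_Icc_one]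
    simp only [pow_zero, one_mul, Nat.sub_zero, Nat.choose_zero_right, Nat.cast_one, mul_one]
    congr 1
    exact Finset.sum_congr rfl (fun k _ => by ring)
  have hXPQ : X * P = X * Q := by
    apply Polynomial.funext
    intro x
    rw [Polynomial.eval_mul, Polynomial.eval_mul, Polynomial.eval_X, hPeval, hQeval]
    rw [Finset.mul_sum, Finset.mul_sum]
    have l1 : ∑ k ∈ Icc 1 n, x * ((n.choose k : ℚ) * ((n-k : ℕ):ℚ)^(n-k) * (x+k)^(k-1))
        = ∑ k ∈ Icc 1 n, (n.choose k : ℚ) * x * (x+k)^(k-1) * ((n-k : ℕ):ℚ)^(n-k) :=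
      Finset.sum_congr rfl (fun k _ => by ring)
    have l2 : ∑ m ∈ Icc 1 n, x * ((n.choose m : ℚ) * (n:ℚ)^(n-m) * x^(m-1))
        = ∑ m ∈ Icc 1 n, (n.choose m : ℚ) * (n:ℚ)^(n-m) * x^m := by
      apply Finset.sum_congr rfl
      intro m hm
      obtain ⟨h1, _⟩ := mem_Icc.mp hm
      have : x * x^(m-1) = x^m := by
        rw [← pow_succ']
        congr 1
        omega
      rw [← this]
      ring
    rw [l1, l2, habel, hbin]
  have hPQ : P = Q := mul_left_cancel₀ Polynomial.X_ne_zero hXPQ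
  have := congrArg (Polynomial.eval 0) hPQ
  rw [hPeval, hQeval] at this
  have hR : ∑ m ∈ Icc 1 n, (n.choose m : ℚ) * (n:ℚ)^(n-m) * (0:ℚ)^(m-1)
      = (n:ℚ) * (n:ℚ)^(n-1) := by
    rw [Finset.sum_eq_single 1 (fun m hm hne => by
        obtain ⟨h1, h2⟩ := mem_Icc.mp hm
        have hm1 : m - 1 ≠ 0 := by omega
        rw [zero_pow hm1, mul_zero]) (fun h => absurd (mem_Icc.mpr ⟨le_refl 1, hn⟩) h)]
    simp
  rw [hR] at this
  calc ∑ k ∈ Icc 1 n, (n.choose k : ℚ) * (k:ℚ)^(k-1) * ((n-k : ℕ):ℚ)^(n-k)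
      = ∑ k ∈ Icc 1 n, (n.choose k : ℚ) * ((n-k : ℕ):ℚ)^(n-k) * ((0:ℚ)+k)^(k-1) :=
        Finset.sum_congr rfl (fun k _ => by rw [zero_add]; ring)
    _ = (n:ℚ) * (n:ℚ)^(n-1) := this
    _ = (n:ℚ)^n := by
        rw [← pow_succ']
        congr 1
        omega

/-! ### Combinatorial part: recursion over compositions -/

private def w (t : ℕ) : ℚ := (t:ℚ)^(t-1) / (t.factorial : ℚ)

private def W (n : ℕ) : ℚ := ∑ c : Composition n, (c.blocks.map w).prod

private lemma W_zero : W 0 = 1 := by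
  rw [W]
  have h : ∀ c : Composition 0, (c.blocks.map w).prod = 1 := by
    intro c
    have : c.blocks = [] := by
      rcases c.blocks.eq_nil_or_concat with h | ⟨l, a, h⟩
      · exact h
      · exfalso
        have hs := c.blocks_sum
        have ha : 0 < a := c.blocks_pos (by simp [h])
        rw [h] at hs
        simp at hs
        omega
    rw [this]
    simp
  rw [Finset.sum_congr rfl (fun c _ => h c)]
  have hcard : Fintype.card (Composition 0) = 1 := by rw [composition_card]; rfl
  simp [Finset.card_univ, hcard]

private lemma blocks_ne_nil {n : ℕ} (hn : 0 < n) (c : Composition n) : c.blocks ≠ [] := by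
  intro h
  have := c.blocks_sum
  rw [h] at this
  simp at this
  omega

private lemma tail_sum {n : ℕ} (hn : 0 < n) (c : Composition n) :
    c.blocks.tail.sum = n - c.blocks.headI := by
  have hs := c.blocks_sum
  cases hb : c.blocks with
  | nil => exact absurd hb (blocks_ne_nil hn c)
  | cons a l =>
    rw [hb] at hs
    simp at hs ⊢
    omega

private lemma headI_mem {n : ℕ} (hn : 0 < n) (c : Composition n) : c.blocks.headI ∈ c.blocks := by
  cases hb : c.blocks with
  | nil => exact absurd hb (blocks_ne_nil hn c)
  | cons a l => simp

private lemma headI_le {n : ℕ} (hn : 0 < n) (c : Composition n) : c.blocks.headI ≤ n := by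
  have hs := c.blocks_sum
  cases hb : c.blocks with
  | nil => exact absurd hb (blocks_ne_nil hn c)
  | cons a l =>
    rw [hb] at hs
    simp at hs ⊢
    omega

private lemma W_rec (n : ℕ) (hn : 0 < n) :
    W n = ∑ t ∈ Icc 1 n, w t * W (n - t) := by
  have h0 : ∀ t ∈ Icc 1 n, w t * W (n-t) = ∑ d ∈ (univ : Finset (Composition (n-t))),
      w t * (d.blocks.map w).prod := by
    intro t ht
    rw [W, Finset.mul_sum]
  rw [Finset.sum_congr rfl h0, W, Finset.sum_sigma']
  refine (Finset.sum_bij'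
    (fun (p : Σ t : ℕ, Composition (n - t)) (hp : p ∈ (Icc 1 n).sigma fun t => (univ : Finset (Composition (n-t)))) =>
      (⟨p.1 :: p.2.blocks,
        by intro i hi
           rcases List.mem_cons.mp hi with h | h
           · have := (mem_Icc.mp (Finset.mem_sigma.mp hp).1).1; omega
           · exact p.2.blocks_pos h,
        by have h2 := (mem_Icc.mp (Finset.mem_sigma.mp hp).1).2
           simp [p.2.blocks_sum]; omega⟩ : Composition n))
    (fun (c : Composition n) (hc : c ∈ (univ : Finset (Composition n))) =>
      (⟨c.blocks.headI,
       ⟨c.blocks.tail,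
        fun hi => c.blocks_pos (List.mem_of_mem_tail hi),
        tail_sum hn c⟩⟩ : Σ t : ℕ, Composition (n - t)))
    ?_ ?_ ?_ ?_ ?_).symm
  · intro a ha; exact mem_univ _
  · intro c _
    refine Finset.mem_sigma.mpr ⟨mem_Icc.mpr ⟨c.blocks_pos (headI_mem hn c), headI_le hn c⟩, mem_univ _⟩
  · intro a ha
    rfl
  · intro c hc
    have hb := blocks_ne_nil hn c
    apply Composition.ext
    dsimp only
    cases hbb : c.blocks with
    | nil => exact absurd hbb hb
    | cons a l =>
      simp [hbb]
  · intro a ha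
    simp

private lemma W_closed : ∀ n : ℕ, W n = (n:ℚ)^n / (n.factorial : ℚ) := by
  intro n
  induction n using Nat.strong_induction_on with
  | _ n ih =>
    rcases Nat.eq_zero_or_pos n with h | h
    · subst h
      rw [W_zero]
      simp
    · rw [W_rec n h]
      have e : ∀ t ∈ Icc 1 n, w t * W (n-t)
          = (n.choose t : ℚ) * (t:ℚ)^(t-1) * ((n-t:ℕ):ℚ)^(n-t) / (n.factorial : ℚ) := by
        intro t ht
        obtain ⟨h1, h2⟩ := mem_Icc.mp ht
        rw [ih (n-t) (by omega), w, Nat.cast_choose ℚ h2]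
        have f1 : (t.factorial : ℚ) ≠ 0 := Nat.cast_ne_zero.mpr (Nat.factorial_ne_zero t)
        have f2 : ((n-t).factorial : ℚ) ≠ 0 := Nat.cast_ne_zero.mpr (Nat.factorial_ne_zero _)
        have f3 : (n.factorial : ℚ) ≠ 0 := Nat.cast_ne_zero.mpr (Nat.factorial_ne_zero n)
        field_simp
      rw [Finset.sum_congr rfl e, ← Finset.sum_div, abel_zero n h]

private lemma map_w_prod (l : List ℕ) :
    ((l.map fun x : ℕ => (x:ℚ)^(x-1)).prod) / (((l.map Nat.factorial).prod : ℕ) : ℚ)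
      = (l.map w).prod := by
  induction l with
  | nil => simp
  | cons a l ih =>
    simp only [List.map_cons, List.prod_cons]
    push_cast
    rw [← ih, w]
    rw [div_mul_div_comm, Nat.cast_list_prod]

theorem sum_over_compositions (n : ℕ) (hn : 0 < n) :
    ∑ c : Composition n,
        (1 / (n : ℚ)) * ((n.factorial : ℚ) / ((c.blocks.map Nat.factorial).prod : ℕ))
          * ((c.blocks.map fun x : ℕ => (x : ℚ) ^ (x - 1)).prod)
      = (n : ℚ) ^ (n - 1) := by
  have e : ∀ c : Composition n,
      (1 / (n : ℚ)) * ((n.factorial : ℚ) / ((c.blocks.map Nat.factorial).prod : ℕ))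
          * ((c.blocks.map fun x : ℕ => (x : ℚ) ^ (x - 1)).prod)
      = ((n.factorial : ℚ) / (n : ℚ)) * (c.blocks.map w).prod := by
    intro c
    rw [← map_w_prod]
    ring
  rw [Finset.sum_congr rfl (fun c _ => e c), ← Finset.mul_sum, ← W, W_closed n]
  have f3 : (n.factorial : ℚ) ≠ 0 := Nat.cast_ne_zero.mpr (Nat.factorial_ne_zero n)
  have hn0 : (n:ℚ) ≠ 0 := Nat.cast_ne_zero.mpr (Nat.pos_iff_ne_zero.mp hn)
  have hpow : (n:ℚ)^n = (n:ℚ)^(n-1) * n := by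
    rw [← pow_succ]
    congr 1
    omega
  rw [hpow]
  field_simp
end
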